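/- arXiv:1902.02123 — 6 statements merged into one kernel-verified Lean document; each statement's English description precedes it below -/
import Mathlib

section
/- Let p(x) = Σ_{j=1}^r b_{α(j)} x^{α(j)} + b_β x^β be a circuit polynomial in n real variables, i.e. r ≥ 1, b_{α(1)},…,b_{α(r)} > 0, the exponents α(j) lie in (2ℕ)^n, b_β ∈ ℝ, and there exist (unique) barycentric coordinates λ_1,…,λ_r > 0 with Σ_{j=1}^r λ_j = 1 and β = Σ_{j=1}^r λ_j α(j). Then p(x) ≥ 0 for all x ∈ ℝ^n if and only if either p is a sum of monomial squares (i.e. β ∈ (2ℕ)^n and b_β ≥ 0), or |b_β| ≤ Θ_p, where Θ_p := Π_{j=1}^r (b_{α(j)}/λ_j)^{λ_j} is the circuit number of p. -/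
open Finset

/-- Product of rpow with same nonneg base and nonneg exponents. -/
lemma aux_prod_rpow {r : ℕ} (w : ℝ) (hw : 0 ≤ w) (e : Fin r → ℝ) (he : ∀ j, 0 ≤ e j) :
    ∏ j, w ^ e j = w ^ (∑ j, e j) := by
  rcases hw.lt_or_eq with hpos | h0
  · rw [Real.rpow_def_of_pos hpos, Finset.mul_sum, Real.exp_sum]
    exact Finset.prod_congr rfl fun j _ => (Real.rpow_def_of_pos hpos _)
  · subst h0
    by_cases hz : ∀ j, e j = 0
    · simp [hz]
    · push_neg at hz
      obtain ⟨j0, hj0⟩ := hz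
      rw [Finset.prod_eq_zero (mem_univ j0) (Real.zero_rpow hj0), eq_comm, Real.zero_rpow]
      intro hs
      have : e j0 ≤ 0 := hs ▸ Finset.single_le_sum (fun j _ => he j) (mem_univ j0)
      exact hj0 (le_antisymm this (he j0))

/-- Solvability of a linear system whose RHS is orthogonal to all relations. -/
lemma aux_exists_solution {n r : ℕ} (v : Fin r → Fin n → ℝ) (c : Fin r → ℝ)
    (h : ∀ μ : Fin r → ℝ, (∀ i, ∑ j, μ j * v j i = 0) → ∑ j, μ j * c j = 0) :
    ∃ s : Fin n → ℝ, ∀ j, ∑ i, v j i * s i = c j := by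
  classical
  let A : (Fin n → ℝ) →ₗ[ℝ] EuclideanSpace ℝ (Fin r) :=
    { toFun := fun s => WithLp.toLp 2 (fun j => ∑ i, v j i * s i : Fin r → ℝ)
      map_add' := by
        intro s t; ext j
        simp [mul_add, Finset.sum_add_distrib]
      map_smul' := by
        intro a s; ext j
        show (∑ i, v j i * (a * s i)) = a * ∑ i, v j i * s i
        rw [Finset.mul_sum]
        exact Finset.sum_congr rfl fun i _ => by ring }
  set W : Submodule ℝ (EuclideanSpace ℝ (Fin r)) := LinearMap.range A with hW
  set cE : EuclideanSpace ℝ (Fin r) := WithLp.toLp 2 (c : Fin r → ℝ) with hcE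
  set μ : EuclideanSpace ℝ (Fin r) := cE - (W.orthogonalProjection cE : EuclideanSpace ℝ (Fin r)) with hμ
  have hμW : μ ∈ Wᗮ := Submodule.sub_starProjection_mem_orthogonal (K := W) cE
  have hrel : ∀ i, ∑ j, μ j * v j i = 0 := by
    intro i
    have hmem : A (Pi.single i 1) ∈ W := LinearMap.mem_range_self A _
    have h0 : inner ℝ μ (A (Pi.single i 1)) = (0 : ℝ) :=
      (Submodule.mem_orthogonal' W μ).1 hμW _ hmem
    rw [PiLp.inner_apply] at h0
    simp only [RCLike.inner_apply, starRingEnd_apply, star_trivial] at h0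
    have hA : ∀ (t : Fin n → ℝ) j, (A t) j = ∑ i', v j i' * t i' := fun _ _ => rfl
    have : ∀ j, (A (Pi.single i 1)) j = v j i := by
      intro j
      rw [hA, Finset.sum_eq_single i]
      · simp
      · intro k _ hk; simp [Pi.single_eq_of_ne hk]
      · simp
    calc ∑ j, μ j * v j i = ∑ j, μ j * (A (Pi.single i 1)) j := by
          exact Finset.sum_congr rfl fun j _ => by rw [this j]
      _ = 0 := by rw [← h0]; exact Finset.sum_congr rfl fun j _ => mul_comm _ _
  have hinner : (inner ℝ μ cE : ℝ) = 0 := by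
    rw [PiLp.inner_apply]
    simp only [RCLike.inner_apply, starRingEnd_apply, star_trivial]
    rw [← h _ hrel]; exact Finset.sum_congr rfl fun j _ => mul_comm _ _
  have hproj : (inner ℝ μ ((W.orthogonalProjection cE : EuclideanSpace ℝ (Fin r))) : ℝ) = 0 :=
    (Submodule.mem_orthogonal' W μ).1 hμW _ (W.orthogonalProjection cE).2
  have hμ0 : μ = 0 := by
    have h2 : (inner ℝ μ (cE - (W.orthogonalProjection cE : EuclideanSpace ℝ (Fin r))) : ℝ) = 0 := by
      rw [inner_sub_right, hinner, hproj, sub_zero]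
    exact inner_self_eq_zero.mp h2
  have hcW : cE ∈ W := by
    have : cE = (W.orthogonalProjection cE : EuclideanSpace ℝ (Fin r)) := by
      have := sub_eq_zero.mp (hμ ▸ hμ0)
      exact this
    rw [this]; exact (W.orthogonalProjection cE).2
  obtain ⟨s, hs⟩ := hcW
  exact ⟨s, fun j => congrArg (fun w : EuclideanSpace ℝ (Fin r) => w j) hs⟩

/-- **Nonnegativity of circuit polynomials** (Iliman–de Wolff).
A circuit polynomial `p(x) = Σ_{j=1}^r b_{α(j)} x^{α(j)} + b_β x^β` is nonnegative on `ℝ^n`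
iff it is a sum of monomial squares, or `|b_β| ≤ Θ_p` where `Θ_p` is the circuit number. -/
theorem circuit_polynomial_nonneg
    (n r : ℕ) (hr : 1 ≤ r)
    (α : Fin r → Fin n → ℕ) (b : Fin r → ℝ) (β : Fin n → ℕ) (bβ : ℝ)
    (lam : Fin r → ℝ)
    (hα : ∀ j i, Even (α j i))
    (hb : ∀ j, 0 < b j)
    (hlam : ∀ j, 0 < lam j)
    (hsum : ∑ j, lam j = 1)
    (hbary : ∀ i, (β i : ℝ) = ∑ j, lam j * (α j i : ℝ))
    (huniq : ∀ lam' : Fin r → ℝ, (∀ j, 0 < lam' j) → (∑ j, lam' j = 1) →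
      (∀ i, (β i : ℝ) = ∑ j, lam' j * (α j i : ℝ)) → lam' = lam) :
    (∀ x : Fin n → ℝ,
        0 ≤ (∑ j, b j * ∏ i, x i ^ α j i) + bβ * ∏ i, x i ^ β i) ↔
      (((∀ i, Even (β i)) ∧ 0 ≤ bβ) ∨
        |bβ| ≤ ∏ j, (b j / lam j) ^ (lam j)) := by
  classical
  set Θ : ℝ := ∏ j, (b j / lam j) ^ (lam j) with hΘdef
  have hΘpos : 0 < Θ :=
    Finset.prod_pos fun j _ => Real.rpow_pos_of_pos (div_pos (hb j) (hlam j)) _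
  have expprod : ∀ (s : Fin n → ℝ) (m : Fin n → ℕ),
      ∏ i, Real.exp (s i) ^ m i = Real.exp (∑ i, (m i : ℝ) * s i) := by
    intro s m
    rw [Real.exp_sum]
    exact Finset.prod_congr rfl fun i _ => (Real.exp_nat_mul (s i) (m i)).symm
  constructor
  · -- forward direction
    intro H
    by_cases hms : (∀ i, Even (β i)) ∧ 0 ≤ bβ
    · exact Or.inl hms
    right
    -- Step 1: exponential inequality
    have G : ∀ s : Fin n → ℝ, |bβ| * Real.exp (∑ i, (β i : ℝ) * s i)
        ≤ ∑ j, b j * Real.exp (∑ i, (α j i : ℝ) * s i) := by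
      intro s
      rcases le_or_gt bβ 0 with h1 | h2
      · -- bβ ≤ 0 : take positive point
        have := H (fun i => Real.exp (s i))
        rw [Finset.sum_congr rfl (fun j (_ : j ∈ univ) => by rw [expprod s (α j)]),
          expprod s β] at this
        rw [abs_of_nonpos h1]
        linarith
      · -- 0 < bβ, hence some β i₀ is odd
        have hodd : ¬ ∀ i, Even (β i) := fun hev => hms ⟨hev, h2.le⟩
        push_neg at hodd
        obtain ⟨i₀, hi₀⟩ := hodd
        set ε : Fin n → ℝ := fun i => if i = i₀ then -1 else 1 with hε
        have hεval : ∀ i, ε i = if i = i₀ then -1 else 1 := fun _ => rfl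
        set x : Fin n → ℝ := fun i => ε i * Real.exp (s i) with hx
        have hxα : ∀ j, ∏ i, x i ^ α j i = Real.exp (∑ i, (α j i : ℝ) * s i) := by
          intro j
          have : ∀ i, x i ^ α j i = Real.exp (s i) ^ α j i := by
            intro i
            rw [hx]
            show (ε i * Real.exp (s i)) ^ α j i = _
            rw [mul_pow]
            by_cases h : i = i₀
            · rw [hεval, if_pos h, (hα j i).neg_one_pow, one_mul]
            · rw [hεval, if_neg h, one_pow, one_mul]
          rw [Finset.prod_congr rfl fun i _ => this i, expprod s (α j)]
        have hxβ : ∏ i, x i ^ β i = -Real.exp (∑ i, (β i : ℝ) * s i) := by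
          have hsplit : ∀ i, x i ^ β i = ε i ^ β i * Real.exp (s i) ^ β i := by
            intro i; rw [hx]; exact mul_pow _ _ _
          rw [Finset.prod_congr rfl fun i _ => hsplit i, Finset.prod_mul_distrib,
            expprod s β]
          have hprodε : ∏ i, ε i ^ β i = -1 := by
            rw [Finset.prod_eq_single i₀]
            · rw [hεval, if_pos rfl]
              exact (Nat.not_even_iff_odd.mp hi₀).neg_one_pow
            · intro k _ hk; rw [hεval, if_neg hk, one_pow]
            · intro h; exact absurd (Finset.mem_univ i₀) h
          rw [hprodε]; ring
        have := H x
        rw [Finset.sum_congr rfl (fun j (_ : j ∈ univ) => by rw [hxα j]), hxβ] at this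
        rw [abs_of_pos h2]
        linarith
    -- Step 2: solve the linear system
    set c : Fin r → ℝ := fun j => Real.log (lam j * Θ / b j) with hc
    have hcpos : ∀ j, 0 < lam j * Θ / b j :=
      fun j => div_pos (mul_pos (hlam j) hΘpos) (hb j)
    have hexpc : ∀ j, Real.exp (c j) = lam j * Θ / b j :=
      fun j => Real.exp_log (hcpos j)
    have hlogΘ : Real.log Θ = ∑ j, lam j * Real.log (b j / lam j) := by
      rw [hΘdef, Real.log_prod
        (fun j _ => ne_of_gt (Real.rpow_pos_of_pos (div_pos (hb j) (hlam j)) _))]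
      exact Finset.sum_congr rfl fun j _ =>
        Real.log_rpow (div_pos (hb j) (hlam j)) _
    have hc0 : ∑ j, lam j * c j = 0 := by
      have hsplit : ∀ j, lam j * c j =
          lam j * Real.log (lam j) + lam j * Real.log Θ - lam j * Real.log (b j) := by
        intro j
        rw [hc]
        show lam j * Real.log (lam j * Θ / b j) = _
        rw [Real.log_div (ne_of_gt (mul_pos (hlam j) hΘpos)) (ne_of_gt (hb j)),
          Real.log_mul (ne_of_gt (hlam j)) (ne_of_gt hΘpos)]
        ring
      rw [Finset.sum_congr rfl fun j _ => hsplit j]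
      have e1 : ∑ j, (lam j * Real.log (lam j) + lam j * Real.log Θ - lam j * Real.log (b j))
          = (∑ j, lam j * Real.log (lam j)) + (∑ j, lam j) * Real.log Θ
            - ∑ j, lam j * Real.log (b j) := by
        rw [Finset.sum_sub_distrib, Finset.sum_add_distrib, Finset.sum_mul]
      have e2 : ∑ j, lam j * Real.log (b j / lam j)
          = (∑ j, lam j * Real.log (b j)) - ∑ j, lam j * Real.log (lam j) := by
        rw [← Finset.sum_sub_distrib]
        refine Finset.sum_congr rfl fun j _ => ?_
        rw [Real.log_div (ne_of_gt (hb j)) (ne_of_gt (hlam j))]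
        ring
      rw [e1, hsum, one_mul, hlogΘ, e2]
      ring
    -- the linear system is solvable
    obtain ⟨s, hs⟩ : ∃ s : Fin n → ℝ, ∀ j, ∑ i, ((α j i : ℝ) - β i) * s i = c j := by
      apply aux_exists_solution
      intro μ hμ
      set t : ℝ := ∑ j, μ j with ht
      have hμα : ∀ i, ∑ j, μ j * (α j i : ℝ) = t * β i := by
        intro i
        have h0 := hμ i
        rw [Finset.sum_congr rfl (fun j (_ : j ∈ univ) => mul_sub (μ j) _ _),
          Finset.sum_sub_distrib, sub_eq_zero] at h0
        rw [h0, ← Finset.sum_mul, ht]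
      set d : Fin r → ℝ := fun j => μ j - t * lam j with hd
      have hdsum : ∑ j, d j = 0 := by
        rw [hd]
        rw [Finset.sum_sub_distrib, ← Finset.mul_sum, hsum, mul_one, ht, sub_self]
      have hdα : ∀ i, ∑ j, d j * (α j i : ℝ) = 0 := by
        intro i
        rw [Finset.sum_congr rfl (fun j (_ : j ∈ univ) =>
          show d j * (α j i : ℝ) = μ j * (α j i : ℝ) - t * (lam j * (α j i : ℝ)) by
            rw [hd]; ring),
          Finset.sum_sub_distrib, hμα i, ← Finset.mul_sum, ← hbary i, sub_self]
      have hne : Nonempty (Fin r) := ⟨⟨0, hr⟩⟩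
      set E : ℝ := Finset.univ.inf' Finset.univ_nonempty (fun j => lam j / (|d j| + 1)) with hE
      have hEpos : 0 < E := by
        rw [hE, Finset.lt_inf'_iff]
        exact fun j _ => div_pos (hlam j) (by positivity)
      have hEle : ∀ j, E ≤ lam j / (|d j| + 1) :=
        fun j => Finset.inf'_le _ (Finset.mem_univ j)
      have hpos' : ∀ j, 0 < lam j + E * d j := by
        intro j
        have h1 : E * (|d j| + 1) ≤ lam j := by
          have := hEle j
          rw [le_div_iff₀ (by positivity)] at this
          exact this
        have h2 : -(E * d j) ≤ E * |d j| := by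
          rw [← mul_neg]
          exact mul_le_mul_of_nonneg_left (neg_le_abs _) hEpos.le
        nlinarith [abs_nonneg (d j)]
      have hsum' : ∑ j, (lam j + E * d j) = 1 := by
        rw [Finset.sum_add_distrib, hsum, ← Finset.mul_sum, hdsum, mul_zero, add_zero]
      have hbary' : ∀ i, (β i : ℝ) = ∑ j, (lam j + E * d j) * (α j i : ℝ) := by
        intro i
        rw [Finset.sum_congr rfl (fun j (_ : j ∈ univ) =>
          show (lam j + E * d j) * (α j i : ℝ)
            = lam j * (α j i : ℝ) + E * (d j * (α j i : ℝ)) by ring),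
          Finset.sum_add_distrib, ← Finset.mul_sum, hdα i, mul_zero, add_zero]
        exact hbary i
      have heq := huniq (fun j => lam j + E * d j) hpos' hsum' hbary'
      have hd0 : ∀ j, d j = 0 := by
        intro j
        have := congrFun heq j
        have hEd : E * d j = 0 := by linarith
        exact (mul_eq_zero.mp hEd).resolve_left (ne_of_gt hEpos)
      have hμlam : ∀ j, μ j = t * lam j := by
        intro j
        have := hd0 j
        rw [hd] at this
        simp only at this
        linarith
      calc ∑ j, μ j * c j = t * ∑ j, lam j * c j := by
            rw [Finset.mul_sum]
            exact Finset.sum_congr rfl fun j _ => by rw [hμlam j]; ring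
        _ = 0 := by rw [hc0, mul_zero]
    -- Step 3: evaluate at s
    have hsj : ∀ j, ∑ i, (α j i : ℝ) * s i = c j + ∑ i, (β i : ℝ) * s i := by
      intro j
      have h0 := hs j
      rw [Finset.sum_congr rfl (fun i (_ : i ∈ univ) => sub_mul ((α j i : ℝ)) _ _),
        Finset.sum_sub_distrib, sub_eq_iff_eq_add] at h0
      rw [h0]
    have hGs := G s
    set S : ℝ := ∑ i, (β i : ℝ) * s i with hS
    have hterm : ∀ j, b j * Real.exp (∑ i, (α j i : ℝ) * s i)
        = lam j * Θ * Real.exp S := by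
      intro j
      rw [hsj j, Real.exp_add, hexpc j,
        show lam j * Θ / b j * Real.exp S = lam j * Θ * Real.exp S / b j by ring,
        ← mul_div_assoc]
      exact mul_div_cancel_left₀ _ (ne_of_gt (hb j))
    have hval : ∑ j, b j * Real.exp (∑ i, (α j i : ℝ) * s i) = Θ * Real.exp S := by
      rw [Finset.sum_congr rfl fun j _ => hterm j, ← Finset.sum_mul, ← Finset.sum_mul,
        hsum, one_mul]
    rw [hval] at hGs
    have hexpS : 0 < Real.exp S := Real.exp_pos S
    exact le_of_mul_le_mul_right hGs hexpS
  · -- backward direction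
    rintro (⟨hev, hbβ⟩ | hle) x
    · -- sum of monomial squares
      have h1 : ∀ j, (0:ℝ) ≤ ∏ i, x i ^ α j i :=
        fun j => Finset.prod_nonneg fun i _ => (hα j i).pow_nonneg _
      have h2 : (0:ℝ) ≤ ∏ i, x i ^ β i :=
        Finset.prod_nonneg fun i _ => (hev i).pow_nonneg _
      exact add_nonneg (Finset.sum_nonneg fun j _ => mul_nonneg (hb j).le (h1 j))
        (mul_nonneg hbβ h2)
    · -- |bβ| ≤ Θ
      set y : Fin r → ℝ := fun j => ∏ i, |x i| ^ α j i with hy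
      have hyeq : ∀ j, ∏ i, x i ^ α j i = y j := by
        intro j
        rw [hy]
        exact (Finset.prod_congr rfl fun i _ => (hα j i).pow_abs (x i)).symm
      have hynn : ∀ j, 0 ≤ y j := by
        intro j; rw [hy]
        exact Finset.prod_nonneg fun i _ => pow_nonneg (abs_nonneg _) _
      have amgm := Real.geom_mean_le_arith_mean_weighted Finset.univ lam
        (fun j => b j / lam j * y j) (fun j _ => (hlam j).le) hsum
        (fun j _ => mul_nonneg (div_pos (hb j) (hlam j)).le (hynn j))
      have hRHS : ∑ j, lam j * (b j / lam j * y j) = ∑ j, b j * y j :=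
        Finset.sum_congr rfl fun j _ => by
          rw [← mul_assoc, mul_comm (lam j) (b j / lam j),
            div_mul_cancel₀ _ (ne_of_gt (hlam j))]
      have hLHS : ∏ j, (b j / lam j * y j) ^ lam j = Θ * ∏ i, |x i| ^ β i := by
        have h1 : ∏ j, (b j / lam j * y j) ^ lam j
            = (∏ j, (b j / lam j) ^ lam j) * ∏ j, y j ^ lam j := by
          rw [← Finset.prod_mul_distrib]
          exact Finset.prod_congr rfl fun j _ =>
            Real.mul_rpow (div_pos (hb j) (hlam j)).le (hynn j)
        rw [h1, ← hΘdef]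
        congr 1
        have h2 : ∀ j, y j ^ lam j = ∏ i, |x i| ^ ((α j i : ℝ) * lam j) := by
          intro j
          have hy' : y j = ∏ i, |x i| ^ ((α j i : ℝ)) := by
            rw [hy]
            exact Finset.prod_congr rfl fun i _ => (Real.rpow_natCast _ _).symm
          rw [hy', ← Real.finset_prod_rpow Finset.univ
            (fun i => |x i| ^ ((α j i : ℝ)))
            (fun i _ => Real.rpow_nonneg (abs_nonneg _) _) (lam j)]
          refine Finset.prod_congr rfl fun i _ => ?_
          rw [← Real.rpow_mul (abs_nonneg _)]
        rw [Finset.prod_congr rfl fun j _ => h2 j, Finset.prod_comm]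
        refine Finset.prod_congr rfl fun i _ => ?_
        rw [aux_prod_rpow |x i| (abs_nonneg _) _
          (fun j => mul_nonneg (Nat.cast_nonneg _) (hlam j).le)]
        have hβi : ∑ j, (α j i : ℝ) * lam j = (β i : ℝ) := by
          rw [hbary i]
          exact Finset.sum_congr rfl fun j _ => mul_comm _ _
        rw [hβi, Real.rpow_natCast]
      have key : Θ * ∏ i, |x i| ^ β i ≤ ∑ j, b j * y j := by
        rw [← hLHS, ← hRHS]; exact amgm
      have habs : |bβ * ∏ i, x i ^ β i| ≤ Θ * ∏ i, |x i| ^ β i := by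
        rw [abs_mul, abs_prod]
        rw [Finset.prod_congr rfl fun i (_ : i ∈ univ) => abs_pow (x i) (β i)]
        exact mul_le_mul_of_nonneg_right hle
          (Finset.prod_nonneg fun i _ => pow_nonneg (abs_nonneg _) _)
      have hlow : -(∑ j, b j * y j) ≤ bβ * ∏ i, x i ^ β i := by
        have := neg_abs_le (bβ * ∏ i, x i ^ β i)
        linarith
      rw [Finset.sum_congr rfl fun j (_ : j ∈ univ) => by rw [hyeq j]]
      linarith
end

section
/- Let p(x) = Σ_{j=1}^t c_j exp(a(j)·x) + β exp(a(0)·x) with c_1,…,c_t > 0, β ∈ ℝ, and a(0), a(1),…,a(t) ∈ ℕ^n. Then p(x) ≥ 0 for all x ∈ ℝ^n if and only if there exists ν ∈ ℝ_{≥0}^t such that D(ν, e·c) ≤ β and Σ_{j=1}^t a(j) ν_j = (Σ_{j=1}^t ν_j) · a(0). -/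
open Finset

open Real Filter


lemma bdd_of_no_recession {t : ℕ} (W : Submodule ℝ (Fin t → ℝ))
    (hW : ∀ u ∈ W, (∀ j, u j ≤ (0:ℝ)) → u = 0) {B : ℝ} (hB : 0 ≤ B) :
    ∃ M : ℝ, ∀ u ∈ W, (∀ j, u j ≤ B) → ‖u‖ ≤ M := by
  by_contra hcon
  push_neg at hcon
  choose u huW hub hnorm using fun k : ℕ => hcon ((k : ℝ) + 1)
  have hupos : ∀ k : ℕ, (0:ℝ) < ‖u k‖ := fun k =>
    lt_trans (by positivity) (hnorm k)
  set y : ℕ → (Fin t → ℝ) := fun k => ‖u k‖⁻¹ • u k with hy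
  have hysph : ∀ k, y k ∈ Metric.sphere (0 : Fin t → ℝ) 1 := by
    intro k
    simp [hy, norm_smul, abs_of_pos (inv_pos.2 (hupos k)),
      inv_mul_cancel₀ (ne_of_gt (hupos k))]
  obtain ⟨z, hzs, φ, hφ, hlim⟩ :=
    (isCompact_sphere (0 : Fin t → ℝ) 1).tendsto_subseq hysph
  have hyW : ∀ k, y k ∈ W := fun k => W.smul_mem _ (huW k)
  have hzW : z ∈ W :=
    W.closed_of_finiteDimensional.mem_of_tendsto hlim
      (Eventually.of_forall fun k => hyW (φ k))
  have hzle : ∀ j, z j ≤ 0 := by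
    intro j
    have h1 : Tendsto (fun k => (y ∘ φ) k j) atTop (nhds (z j)) :=
      ((continuous_apply j).continuousAt.tendsto.comp hlim)
    have h2 : Tendsto (fun k : ℕ => B * (1 / ((k:ℝ) + 1))) atTop (nhds 0) := by
      simpa using tendsto_one_div_add_atTop_nhds_zero_nat.const_mul B
    refine le_of_tendsto_of_tendsto' h1 h2 ?_
    intro k
    have hb : (y ∘ φ) k j = ‖u (φ k)‖⁻¹ * u (φ k) j := rfl
    rw [hb]
    have h3 : ‖u (φ k)‖⁻¹ * u (φ k) j ≤ ‖u (φ k)‖⁻¹ * B :=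
      mul_le_mul_of_nonneg_left (hub (φ k) j) (le_of_lt (inv_pos.2 (hupos (φ k))))
    refine h3.trans ?_
    rw [mul_comm]
    refine mul_le_mul_of_nonneg_left ?_ hB
    rw [one_div]
    refine inv_anti₀ (by positivity) ?_
    calc ((k:ℝ) + 1) ≤ (φ k : ℝ) + 1 := by
          have h4 : k ≤ φ k := hφ.le_apply
          have h5 : (k:ℝ) ≤ (φ k : ℝ) := Nat.cast_le.2 h4
          linarith
      _ ≤ ‖u (φ k)‖ := (hnorm (φ k)).le
  have := hW z hzW hzle
  rw [this] at hzs
  simp at hzs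

lemma exists_min {t n : ℕ} (α : Fin t → Fin n → ℝ) (c : Fin t → ℝ)
    (hc : ∀ j, 0 < c j) (T : Finset (Fin t)) (hT : T.Nonempty)
    (hny : ∀ y : Fin n → ℝ, (∀ j ∈ T, ∑ i, α j i * y i ≤ 0) →
      ∀ j ∈ T, ∑ i, α j i * y i = 0) :
    ∃ xs : Fin n → ℝ, ∀ x : Fin n → ℝ,
      (∑ j ∈ T, c j * Real.exp (∑ i, α j i * xs i)) ≤
        ∑ j ∈ T, c j * Real.exp (∑ i, α j i * x i) := by
  classical
  set L : (Fin n → ℝ) →ₗ[ℝ] (Fin t → ℝ) :=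
    { toFun := fun x j => if j ∈ T then ∑ i, α j i * x i else 0
      map_add' := by
        intro x y; funext j
        by_cases hj : j ∈ T <;> simp [hj, mul_add, Finset.sum_add_distrib]
      map_smul' := by
        intro r x; funext j
        by_cases hj : j ∈ T <;>
          simp [hj, Finset.mul_sum, mul_left_comm] } with hL
  have hLapp : ∀ x j, L x j = if j ∈ T then ∑ i, α j i * x i else 0 := fun x j => rfl
  set W := LinearMap.range L with hWdef
  have hW : ∀ u ∈ W, (∀ j, u j ≤ (0:ℝ)) → u = 0 := by
    rintro u ⟨x, rfl⟩ hu
    have h1 : ∀ j ∈ T, ∑ i, α j i * x i ≤ 0 := by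
      intro j hj; have := hu j; rwa [hLapp, if_pos hj] at this
    have h2 := hny x h1
    funext j
    rw [hLapp]
    by_cases hj : j ∈ T
    · rw [if_pos hj]; exact h2 j hj
    · rw [if_neg hj]; rfl
  set S : ℝ := ∑ k ∈ T, c k with hS
  have hSpos : 0 < S := Finset.sum_pos (fun j _ => hc j) hT
  set B' : ℝ := max 0 (T.sup' hT fun j => Real.log (S / c j)) with hB'
  have hB'0 : (0:ℝ) ≤ B' := le_max_left _ _
  have hB'j : ∀ j ∈ T, Real.log (S / c j) ≤ B' := fun j hj =>
    le_trans (Finset.le_sup' (fun j => Real.log (S / c j)) hj) (le_max_right _ _)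
  obtain ⟨M, hM⟩ := bdd_of_no_recession W hW hB'0
  set G : (Fin t → ℝ) → ℝ := fun u => ∑ j ∈ T, c j * Real.exp (u j) with hG
  have hGcont : Continuous G :=
    continuous_finset_sum _ fun j _ =>
      continuous_const.mul (Real.continuous_exp.comp (continuous_apply j))
  set K : Set (Fin t → ℝ) := {u | u ∈ W ∧ ∀ j, u j ≤ B'} with hK
  have hKclosed : IsClosed K := by
    have h1 : K = (W : Set (Fin t → ℝ)) ∩ ⋂ j, {u | u j ≤ B'} := by
      ext u; simp [hK, Set.mem_iInter]
    rw [h1]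
    exact W.closed_of_finiteDimensional.inter
      (isClosed_iInter fun j => isClosed_le (continuous_apply j) continuous_const)
  have hKsub : K ⊆ Metric.closedBall 0 M := by
    intro u hu
    rw [Metric.mem_closedBall, dist_zero_right]
    exact hM u hu.1 hu.2
  have hKcompact : IsCompact K :=
    (isCompact_closedBall 0 M).of_isClosed_subset hKclosed hKsub
  have h0K : (0 : Fin t → ℝ) ∈ K := ⟨W.zero_mem, fun j => hB'0⟩
  obtain ⟨us, husK, hmin⟩ := hKcompact.exists_isMinOn ⟨0, h0K⟩ hGcont.continuousOn
  obtain ⟨xs, hxs⟩ := husK.1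
  have hGL : ∀ x, G (L x) = ∑ j ∈ T, c j * Real.exp (∑ i, α j i * x i) := by
    intro x
    refine Finset.sum_congr rfl fun j hj => ?_
    rw [hLapp, if_pos hj]
  have hG0 : G 0 = S := by
    simp [hG, hS]
  have hGusS : G us ≤ S := by
    have h := hmin h0K
    rw [← hG0]
    exact h
  refine ⟨xs, fun x => ?_⟩
  rw [← hGL, ← hGL, hxs]
  by_cases hx : ∀ j, L x j ≤ B'
  · exact hmin ⟨⟨x, rfl⟩, hx⟩
  · push_neg at hx
    obtain ⟨j, hj⟩ := hx
    have hjT : j ∈ T := by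
      by_contra hjT
      rw [hLapp, if_neg hjT] at hj
      exact absurd hj (not_lt.2 hB'0)
    have h1 : c j * Real.exp (L x j) ≤ G (L x) :=
      Finset.single_le_sum (f := fun k => c k * Real.exp (L x k))
        (fun k _ => le_of_lt (mul_pos (hc k) (Real.exp_pos _))) hjT
    have h2 : S ≤ c j * Real.exp (L x j) := by
      have h3 : Real.exp (Real.log (S / c j)) ≤ Real.exp (L x j) :=
        Real.exp_le_exp.2 (le_of_lt (lt_of_le_of_lt (hB'j j hjT) hj))
      rw [Real.exp_log (div_pos hSpos (hc j))] at h3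
      calc S = c j * (S / c j) := by rw [mul_div_cancel₀ _ (ne_of_gt (hc j))]
        _ ≤ c j * Real.exp (L x j) := mul_le_mul_of_nonneg_left h3 (hc j).le
    exact le_trans hGusS (le_trans h2 h1)

lemma grad_zero {t n : ℕ} (α : Fin t → Fin n → ℝ) (c : Fin t → ℝ)
    (T : Finset (Fin t)) (xs : Fin n → ℝ)
    (hmin : ∀ x : Fin n → ℝ,
      (∑ j ∈ T, c j * Real.exp (∑ i, α j i * xs i)) ≤
        ∑ j ∈ T, c j * Real.exp (∑ i, α j i * x i)) :
    ∀ i, ∑ j ∈ T, c j * Real.exp (∑ i', α j i' * xs i') * α j i = 0 := by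
  classical
  intro i
  set A : Fin t → ℝ := fun j => ∑ i', α j i' * xs i' with hA
  set f : ℝ → ℝ := fun s => ∑ j ∈ T, c j * Real.exp (A j + s * α j i) with hf
  have key : ∀ (s : ℝ) (j : Fin t),
      (∑ i', α j i' * (xs i' + if i' = i then s else 0)) = A j + s * α j i := by
    intro s j
    simp only [mul_add, Finset.sum_add_distrib]
    congr 1
    have h1 : ∀ i', α j i' * (if i' = i then s else 0)
        = if i' = i then s * α j i' else 0 := by
      intro i'
      by_cases h : i' = i
      · simp [h, mul_comm]
      · simp [h]
    rw [Finset.sum_congr rfl fun i' _ => h1 i', Finset.sum_ite_eq' univ i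
      (fun i' => s * α j i')]
    simp
  have hderiv : HasDerivAt f (∑ j ∈ T, c j * Real.exp (A j) * α j i) 0 := by
    apply HasDerivAt.fun_sum
    intro j hj
    have h1 : HasDerivAt (fun s : ℝ => A j + s * α j i) (α j i) 0 := by
      simpa using ((hasDerivAt_id (0:ℝ)).mul_const (α j i)).const_add (A j)
    have h2 := (h1.exp).const_mul (c j)
    simpa [mul_assoc] using h2
  have hlocmin : IsLocalMin f 0 := by
    refine Filter.Eventually.of_forall fun s => ?_
    have hf0 : f 0 = ∑ j ∈ T, c j * Real.exp (A j) := by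
      simp [hf]
    have hfs : f s = ∑ j ∈ T, c j * Real.exp
        (∑ i', α j i' * (xs i' + if i' = i then s else 0)) := by
      refine Finset.sum_congr rfl fun j hj => ?_
      rw [key s j]
    rw [hf0, hfs]
    exact hmin (fun i' => xs i' + if i' = i then s else 0)
  exact hlocmin.hasDerivAt_eq_zero hderiv

lemma fwd_key {t n : ℕ} (α : Fin t → Fin n → ℝ) (c : Fin t → ℝ)
    (hc : ∀ j, 0 < c j) (T : Finset (Fin t)) :
    ∀ β : ℝ,
      (∀ x : Fin n → ℝ, 0 ≤ (∑ j ∈ T, c j * Real.exp (∑ i, α j i * x i)) + β) →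
      ∃ ν : Fin t → ℝ, (∀ j, 0 ≤ ν j) ∧ (∀ j, j ∉ T → ν j = 0) ∧
        (∑ j ∈ T, ν j * Real.log (ν j / (Real.exp 1 * c j))) ≤ β ∧
        (∀ i, ∑ j ∈ T, α j i * ν j = 0) := by
  classical
  induction T using Finset.strongInduction with
  | _ T ih =>
  intro β h
  by_cases hrec : ∃ y : Fin n → ℝ, (∀ j ∈ T, ∑ i, α j i * y i ≤ 0) ∧
      (∃ j0 ∈ T, ∑ i, α j0 i * y i < 0)
  · -- recession direction: drop the strictly-negative terms, recurse
    obtain ⟨y, hy1, j0, hj0T, hj0⟩ := hrec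
    set T' : Finset (Fin t) := T.filter (fun j => ∑ i, α j i * y i = 0) with hT'
    have hT'sub : T' ⊆ T := Finset.filter_subset _ _
    have hT'ss : T' ⊂ T := Finset.filter_ssubset.2 ⟨j0, hj0T, ne_of_lt hj0⟩
    have hnew : ∀ x : Fin n → ℝ,
        0 ≤ (∑ j ∈ T', c j * Real.exp (∑ i, α j i * x i)) + β := by
      intro x
      set A : Fin t → ℝ := fun j => ∑ i, α j i * x i with hA
      set B : Fin t → ℝ := fun j => ∑ i, α j i * y i with hB
      have hsplit : ∀ (R : ℝ) (j : Fin t),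
          (∑ i, α j i * (x i + R * y i)) = A j + R * B j := by
        intro R j
        simp only [hA, hB, mul_add, Finset.sum_add_distrib, Finset.mul_sum]
        congr 1
        exact Finset.sum_congr rfl fun i _ => by ring
      have hbig : ∀ R : ℝ,
          0 ≤ (∑ j ∈ T, c j * Real.exp (A j + R * B j)) + β := by
        intro R
        have := h (fun i => x i + R * y i)
        calc (0:ℝ) ≤ _ := this
          _ = _ := by
            congr 1
            exact Finset.sum_congr rfl fun j _ => by rw [hsplit R j]
      have hsum : ∀ R : ℝ, (∑ j ∈ T, c j * Real.exp (A j + R * B j))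
          = (∑ j ∈ T', c j * Real.exp (A j + R * B j))
            + ∑ j ∈ T.filter (fun j => ¬ (B j = 0)), c j * Real.exp (A j + R * B j) := by
        intro R
        exact (Finset.sum_filter_add_sum_filter_not T (fun j => B j = 0) _).symm
      have htend : Tendsto
          (fun R : ℝ => (∑ j ∈ T, c j * Real.exp (A j + R * B j)) + β)
          atTop (nhds ((∑ j ∈ T', c j * Real.exp (A j)) + β)) := by
        have h1 : Tendsto (fun R : ℝ => ∑ j ∈ T', c j * Real.exp (A j + R * B j))
            atTop (nhds (∑ j ∈ T', c j * Real.exp (A j))) := by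
          have : ∀ R : ℝ, (∑ j ∈ T', c j * Real.exp (A j + R * B j))
              = ∑ j ∈ T', c j * Real.exp (A j) := by
            intro R
            refine Finset.sum_congr rfl fun j hj => ?_
            have hBj : B j = 0 := (Finset.mem_filter.1 hj).2
            rw [hBj, mul_zero, add_zero]
          rw [funext this]
          exact tendsto_const_nhds
        have h2 : Tendsto (fun R : ℝ => ∑ j ∈ T.filter (fun j => ¬ (B j = 0)),
            c j * Real.exp (A j + R * B j)) atTop (nhds 0) := by
          have h2' : Tendsto (fun R : ℝ => ∑ j ∈ T.filter (fun j => ¬ (B j = 0)),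
              c j * Real.exp (A j + R * B j)) atTop
              (nhds (∑ j ∈ T.filter (fun j => ¬ (B j = 0)), (0:ℝ))) := by
            refine tendsto_finset_sum _ fun j hj => ?_
            have hjT : j ∈ T := (Finset.mem_filter.1 hj).1
            have hBj : B j < 0 := lt_of_le_of_ne (hy1 j hjT) ((Finset.mem_filter.1 hj).2)
            have h3 : Tendsto (fun R : ℝ => A j + R * B j) atTop atBot :=
              tendsto_atBot_add_const_left _ _ (tendsto_id.atTop_mul_const_of_neg hBj)
            have h4 : Tendsto (fun R : ℝ => Real.exp (A j + R * B j)) atTop (nhds 0) :=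
              Real.tendsto_exp_atBot.comp h3
            simpa using h4.const_mul (c j)
          simpa using h2'
        have h5 := (h1.add h2).add (tendsto_const_nhds (x := β))
        simp only [add_zero] at h5
        refine Tendsto.congr (fun R => ?_) h5
        rw [← hsum R]
      exact ge_of_tendsto' htend hbig
    obtain ⟨ν, hν0, hνsupp, hνD, hνbal⟩ := ih T' hT'ss β hnew
    have hsupp : ∀ j, j ∉ T → ν j = 0 := fun j hj =>
      hνsupp j (fun hj' => hj (hT'sub hj'))
    have hzero : ∀ j ∈ T, j ∉ T' → ν j = 0 := fun j _ hj' => hνsupp j hj'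
    refine ⟨ν, hν0, hsupp, ?_, ?_⟩
    · calc (∑ j ∈ T, ν j * Real.log (ν j / (Real.exp 1 * c j)))
          = ∑ j ∈ T', ν j * Real.log (ν j / (Real.exp 1 * c j)) :=
            (Finset.sum_subset hT'sub (fun j hj hj' => by
              rw [hzero j hj hj', zero_mul])).symm
        _ ≤ β := hνD
    · intro i
      calc (∑ j ∈ T, α j i * ν j) = ∑ j ∈ T', α j i * ν j :=
            (Finset.sum_subset hT'sub (fun j hj hj' => by
              rw [hzero j hj hj', mul_zero])).symm
        _ = 0 := hνbal i
  · -- no recession direction: the infimum is attained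
    push_neg at hrec
    rcases T.eq_empty_or_nonempty with hTe | hTne
    · refine ⟨fun _ => 0, fun j => le_refl 0, fun j _ => rfl, ?_, ?_⟩
      · have h0 := h 0
        simp [hTe] at h0 ⊢
        exact h0
      · intro i; simp
    · have hny : ∀ y : Fin n → ℝ, (∀ j ∈ T, ∑ i, α j i * y i ≤ 0) →
          ∀ j ∈ T, ∑ i, α j i * y i = 0 := by
        intro y hy j hj
        exact le_antisymm (hy j hj) (hrec y hy j hj)
      obtain ⟨xs, hxs⟩ := exists_min α c hc T hTne hny
      have hgrad := grad_zero α c T xs hxs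
      set A : Fin t → ℝ := fun j => ∑ i, α j i * xs i with hA
      set ν : Fin t → ℝ := fun j => if j ∈ T then c j * Real.exp (A j) else 0 with hν
      have hν0 : ∀ j, 0 ≤ ν j := by
        intro j
        rw [hν]
        dsimp only
        split
        · exact le_of_lt (mul_pos (hc j) (Real.exp_pos _))
        · exact le_refl 0
      have hνsupp : ∀ j, j ∉ T → ν j = 0 := by
        intro j hj; rw [hν]; dsimp only; rw [if_neg hj]
      have hνT : ∀ j ∈ T, ν j = c j * Real.exp (A j) := by
        intro j hj; rw [hν]; dsimp only; rw [if_pos hj]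
      refine ⟨ν, hν0, hνsupp, ?_, ?_⟩
      · have hlog : ∀ j ∈ T, ν j * Real.log (ν j / (Real.exp 1 * c j))
            = c j * Real.exp (A j) * (A j - 1) := by
          intro j hj
          rw [hνT j hj]
          congr 1
          have harg : c j * Real.exp (A j) / (Real.exp 1 * c j)
              = Real.exp (A j - 1) := by
            rw [Real.exp_sub, mul_comm (Real.exp 1) (c j),
              mul_div_mul_left _ _ (ne_of_gt (hc j))]
          rw [harg, Real.log_exp]
        calc (∑ j ∈ T, ν j * Real.log (ν j / (Real.exp 1 * c j)))
            = ∑ j ∈ T, c j * Real.exp (A j) * (A j - 1) :=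
              Finset.sum_congr rfl hlog
          _ = (∑ j ∈ T, c j * Real.exp (A j) * A j)
              - ∑ j ∈ T, c j * Real.exp (A j) := by
              rw [← Finset.sum_sub_distrib]
              exact Finset.sum_congr rfl fun j _ => by ring
          _ = 0 - ∑ j ∈ T, c j * Real.exp (A j) := by
              congr 1
              have hswap : (∑ j ∈ T, c j * Real.exp (A j) * A j)
                  = ∑ i, xs i * ∑ j ∈ T, c j * Real.exp (A j) * α j i := by
                rw [hA]
                simp only [Finset.mul_sum]
                rw [Finset.sum_comm]
                refine Finset.sum_congr rfl fun j hj => ?_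
                refine Finset.sum_congr rfl fun i hi => ?_
                ring
              rw [hswap]
              rw [Finset.sum_congr rfl fun i (_ : i ∈ univ) => by rw [hgrad i]]
              simp
          _ ≤ β := by
              have := h xs
              rw [zero_sub, neg_le]
              linarith
      · intro i
        calc (∑ j ∈ T, α j i * ν j) = ∑ j ∈ T, c j * Real.exp (A j) * α j i := by
              refine Finset.sum_congr rfl fun j hj => ?_
              rw [hνT j hj]; ring
          _ = 0 := hgrad i

lemma bwd_key {t n : ℕ} (α : Fin t → Fin n → ℝ) (c : Fin t → ℝ)
    (hc : ∀ j, 0 < c j) (β : ℝ) (ν : Fin t → ℝ) (hν0 : ∀ j, 0 ≤ ν j)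
    (hD : (∑ j, ν j * Real.log (ν j / (Real.exp 1 * c j))) ≤ β)
    (hbal : ∀ i, ∑ j, α j i * ν j = 0) :
    ∀ x : Fin n → ℝ, 0 ≤ (∑ j, c j * Real.exp (∑ i, α j i * x i)) + β := by
  intro x
  set s : Fin t → ℝ := fun j => ∑ i, α j i * x i with hs
  have key : ∀ j, ν j * s j - ν j * Real.log (ν j / (Real.exp 1 * c j))
      ≤ c j * Real.exp (s j) := by
    intro j
    rcases eq_or_lt_of_le (hν0 j) with h0 | hpos
    · rw [← h0]
      simp only [zero_mul, sub_zero, sub_self]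
      exact mul_nonneg (hc j).le (Real.exp_pos _).le
    · have hcj := hc j
      have hlog1 : Real.log (ν j / (Real.exp 1 * c j))
          = Real.log (ν j) - 1 - Real.log (c j) := by
        rw [Real.log_div (ne_of_gt hpos) (by positivity),
          Real.log_mul (Real.exp_ne_zero 1) (ne_of_gt hcj), Real.log_exp]
        ring
      have hz : (0:ℝ) < c j * Real.exp (s j) / ν j := by positivity
      have h1 := Real.log_le_sub_one_of_pos hz
      have hlog2 : Real.log (c j * Real.exp (s j) / ν j)
          = Real.log (c j) + s j - Real.log (ν j) := by
        rw [Real.log_div (by positivity) (ne_of_gt hpos),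
          Real.log_mul (ne_of_gt hcj) (Real.exp_ne_zero _), Real.log_exp]
      rw [hlog2] at h1
      have h2 : ν j * (Real.log (c j) + s j - Real.log (ν j))
          ≤ ν j * (c j * Real.exp (s j) / ν j - 1) :=
        mul_le_mul_of_nonneg_left h1 hpos.le
      have h3 : ν j * (c j * Real.exp (s j) / ν j - 1)
          = c j * Real.exp (s j) - ν j := by
        field_simp
      rw [h3] at h2
      rw [hlog1]
      nlinarith [h2]
  have hsum := Finset.sum_le_sum (fun j (_ : j ∈ univ) => key j)
  rw [Finset.sum_sub_distrib] at hsum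
  have hνs : ∑ j, ν j * s j = 0 := by
    have h1 : ∑ j, ν j * s j = ∑ i, (∑ j, α j i * ν j) * x i := by
      simp only [hs, Finset.mul_sum, Finset.sum_mul]
      rw [Finset.sum_comm]
      refine Finset.sum_congr rfl fun i _ => ?_
      refine Finset.sum_congr rfl fun j _ => ?_
      ring
    rw [h1]
    rw [Finset.sum_congr rfl fun i (_ : i ∈ univ) => by rw [hbal i]]
    simp
  rw [hνs] at hsum
  linarith [hsum, hD]

/-- **Nonnegativity of AGE signomials** (Chandrasekaran–Shah, Lemma 2.2).
`p(x) = Σ_{j=1}^t c_j exp(a(j)·x) + β exp(a(0)·x)` with `c_j > 0` is nonnegative on `ℝ^n`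
iff there exists `ν ≥ 0` with `D(ν, e·c) ≤ β` and `Σ_j a(j) ν_j = (Σ_j ν_j) a(0)`. -/
theorem age_nonneg_iff
    (n t : ℕ) (a : Fin t → Fin n → ℕ) (a0 : Fin n → ℕ)
    (c : Fin t → ℝ) (β : ℝ) (hc : ∀ j, 0 < c j) :
    (∀ x : Fin n → ℝ,
        0 ≤ (∑ j, c j * Real.exp (∑ i, (a j i : ℝ) * x i))
              + β * Real.exp (∑ i, (a0 i : ℝ) * x i)) ↔
      ∃ ν : Fin t → ℝ, (∀ j, 0 ≤ ν j) ∧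
        (∑ j, ν j * Real.log (ν j / (Real.exp 1 * c j))) ≤ β ∧
        (∀ i, ∑ j, (a j i : ℝ) * ν j = (∑ j, ν j) * (a0 i : ℝ)) := by
  classical
  set α : Fin t → Fin n → ℝ := fun j i => (a j i : ℝ) - (a0 i : ℝ) with hα
  have h2 : ∀ x : Fin n → ℝ,
      (∑ j, c j * Real.exp (∑ i, (a j i : ℝ) * x i))
        + β * Real.exp (∑ i, (a0 i : ℝ) * x i)
      = Real.exp (∑ i, (a0 i : ℝ) * x i)
        * ((∑ j, c j * Real.exp (∑ i, α j i * x i)) + β) := by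
    intro x
    have hexp : ∀ j : Fin t, Real.exp (∑ i, (a j i : ℝ) * x i)
        = Real.exp (∑ i, (a0 i : ℝ) * x i) * Real.exp (∑ i, α j i * x i) := by
      intro j
      rw [← Real.exp_add]
      congr 1
      rw [← Finset.sum_add_distrib]
      refine Finset.sum_congr rfl fun i _ => ?_
      simp only [hα]
      ring
    rw [mul_add, Finset.mul_sum]
    congr 1
    · refine Finset.sum_congr rfl fun j _ => ?_
      rw [hexp j]
      ring
    · ring
  have hLHS : (∀ x : Fin n → ℝ,
      0 ≤ (∑ j, c j * Real.exp (∑ i, (a j i : ℝ) * x i))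
        + β * Real.exp (∑ i, (a0 i : ℝ) * x i)) ↔
      (∀ x : Fin n → ℝ, 0 ≤ (∑ j, c j * Real.exp (∑ i, α j i * x i)) + β) := by
    constructor
    · intro h x
      have h1 := h x
      rw [h2 x] at h1
      nlinarith [h1, Real.exp_pos (∑ i, (a0 i : ℝ) * x i)]
    · intro h x
      rw [h2 x]
      exact mul_nonneg (Real.exp_pos _).le (h x)
  have hbalid : ∀ (ν : Fin t → ℝ) (i : Fin n),
      ∑ j, α j i * ν j
        = (∑ j, (a j i : ℝ) * ν j) - (∑ j, ν j) * (a0 i : ℝ) := by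
    intro ν i
    simp only [hα, sub_mul]
    rw [Finset.sum_sub_distrib]
    congr 1
    rw [Finset.sum_mul]
    exact Finset.sum_congr rfl fun j _ => by ring
  constructor
  · intro h
    obtain ⟨ν, hν0, _, hD, hb⟩ := fwd_key α c hc Finset.univ β (hLHS.1 h)
    refine ⟨ν, hν0, hD, fun i => ?_⟩
    have := hb i
    rw [hbalid ν i] at this
    linarith
  · rintro ⟨ν, hν0, hD, hb⟩
    refine hLHS.2 (bwd_key α c hc β ν hν0 hD fun i => ?_)
    rw [hbalid ν i, hb i]
    ring
end

section
/- Fix exponents a(1),…,a(t) ∈ ℕ^n and let C_SAGE ⊆ ℝ^t be the cone of coefficient vectors b such that Σ_{j=1}^t b_j exp(a(j)·x) is a sum of AGE signomials supported on {a(1),…,a(t)}. Suppose b lies in the interior of C_SAGE and ε > 0 is such that b − ε·(1,…,1) ∈ C_SAGE. Then there exist vectors c^(1),…,c^(t), ν^(1),…,ν^(t) ∈ ℝ^t and a rational δ with 0 < δ ≤ 1 such that: Σ_{j=1}^t c^(j) = b; Σ_{i=1}^t a(i)·ν_i^(j) = 0 and ν_j^(j) = −Σ_{i≠j} ν_i^(j)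 for all j; ν_i^(j) ≥ 0 and c_i^(j) ≥ 0 for all i ≠ j; and D(ν^(j)_{∖j}, e·(c^(j)_{∖j} + δ·1)) + ε/2 ≤ c_j^(j) for all j = 1,…,t, where ν^(j)_{∖j} denotes ν^(j) with its j-th entry removed and 1 is the all-ones vector in ℝ^{t−1}. -/
open Finset

/-- The signomial on `ℝ^n` with exponents `a(1),…,a(t) ∈ ℕ^n` and coefficient vector `c`. -/
noncomputable def signomial (n t : ℕ) (a : Fin t → Fin n → ℕ) (c : Fin t → ℝ)
    (x : Fin n → ℝ) : ℝ :=
  ∑ j, c j * Real.exp (∑ i, (a j i : ℝ) * x i)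

/-- An AGE signomial: nonnegative on all of `ℝ^n` with at most one negative coefficient. -/
def IsAGE (n t : ℕ) (a : Fin t → Fin n → ℕ) (c : Fin t → ℝ) : Prop :=
  (∀ x : Fin n → ℝ, 0 ≤ signomial n t a c x) ∧ {j | c j < 0}.Subsingleton

/-- The SAGE cone: coefficient vectors whose signomial is a sum of AGE signomials
supported on `{a(1),…,a(t)}`. -/
def CSage (n t : ℕ) (a : Fin t → Fin n → ℕ) : Set (Fin t → ℝ) :=
  {b | ∃ (k : ℕ) (c : Fin k → Fin t → ℝ),
    (∀ i, ∑ j, c j i = b i) ∧ ∀ j, IsAGE n t a (c j)}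


open Real in
lemma cont_sup' {ι : Type*} (S : Finset ι) (h : S.Nonempty) :
    Continuous fun v : ι → ℝ => S.sup' h fun i => v i := by
  induction h using Finset.Nonempty.cons_induction with
  | singleton a => simpa using continuous_apply a
  | cons a s ha hs ih =>
      simp only [Finset.sup'_cons hs]
      exact (continuous_apply a).max ih

noncomputable def rowA (n : ℕ) {ι : Type*} [Fintype ι] [DecidableEq ι]
    (d : ι → Fin n → ℝ) (S : Finset ι) : (Fin n → ℝ) →ₗ[ℝ] (ι → ℝ) :=
  LinearMap.pi (fun i => if i ∈ S then (∑ k, d i k • LinearMap.proj k) else 0)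

lemma rowA_apply (n : ℕ) {ι : Type*} [Fintype ι] [DecidableEq ι]
    (d : ι → Fin n → ℝ) (S : Finset ι) (x : Fin n → ℝ) (i : ι) :
    rowA n d S x i = if i ∈ S then ∑ k, d i k * x k else 0 := by
  simp only [rowA, LinearMap.pi_apply]
  split
  · simp [LinearMap.sum_apply, LinearMap.smul_apply]
  · rfl

lemma sage_min {n : ℕ} {ι : Type*} [Fintype ι] [DecidableEq ι]
    (d : ι → Fin n → ℝ) (q : ι → ℝ) (hq : ∀ i, 0 < q i) (S : Finset ι) (hne : S.Nonempty)
    (hno : ∀ x : Fin n → ℝ, (∀ i ∈ S, (∑ k, d i k * x k) ≤ 0) → ∀ i ∈ S, (∑ k, d i k * x k) = 0) :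
    ∃ x : Fin n → ℝ, ∀ y : Fin n → ℝ,
      ∑ i ∈ S, q i * Real.exp (∑ k, d i k * x k) ≤ ∑ i ∈ S, q i * Real.exp (∑ k, d i k * y k) := by
  classical
  set A := rowA n d S with hA
  set h : (ι → ℝ) → ℝ := fun v => ∑ i ∈ S, q i * Real.exp (v i) with hh
  have hfh : ∀ y : Fin n → ℝ, ∑ i ∈ S, q i * Real.exp (∑ k, d i k * y k) = h (A y) := by
    intro y
    refine Finset.sum_congr rfl fun i hi => ?_
    rw [rowA_apply, if_pos hi]
  have hcont : Continuous h :=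
    continuous_finset_sum _ fun i _ =>
      continuous_const.mul (Real.continuous_exp.comp (continuous_apply i))
  have hVzero : ∀ v ∈ LinearMap.range A, (∀ i, v i ≤ 0) → v = 0 := by
    rintro v ⟨x, rfl⟩ hle
    have hz := hno x (fun i hi => by
      have := hle i
      rwa [rowA_apply, if_pos hi] at this)
    funext i
    rw [rowA_apply]
    split
    · exact hz i ‹_›
    · rfl
  set K : Set (ι → ℝ) := (LinearMap.range A : Set (ι → ℝ)) ∩ Metric.sphere 0 1 with hK
  by_cases hKne : K.Nonempty
  · -- coercive case
    set g : (ι → ℝ) → ℝ := fun v => S.sup' hne fun i => v i with hg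
    have hgcont : Continuous g := cont_sup' S hne
    have hgsmul : ∀ (c : ℝ), 0 ≤ c → ∀ v : ι → ℝ, g (c • v) = c * g v := by
      intro c hc v
      have := Finset.comp_sup'_eq_sup'_comp hne (f := fun i => v i) (fun y => c * y)
        (fun x y => by rcases le_total x y with hxy | hxy <;>
          simp [max_eq_right, max_eq_left, hxy, mul_le_mul_of_nonneg_left hxy hc,
            mul_le_mul_of_nonneg_left] )
      simp only [Function.comp] at this
      rw [hg]
      simp only [Pi.smul_apply, smul_eq_mul]
      rw [← this]
    have hKcomp : IsCompact K :=
      Metric.isCompact_of_isClosed_isBounded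
        ((Submodule.closed_of_finiteDimensional _).inter Metric.isClosed_sphere)
        ((Metric.isBounded_sphere).subset Set.inter_subset_right)
    obtain ⟨v₀, hv₀K, hv₀min⟩ := hKcomp.exists_isMinOn hKne hgcont.continuousOn
    set α := g v₀ with hα
    have hαpos : 0 < α := by
      by_contra hle
      push_neg at hle
      have hvle : ∀ i, v₀ i ≤ 0 := by
        intro i
        by_cases hi : i ∈ S
        · exact le_trans (Finset.le_sup' (fun i => v₀ i) hi) hle
        · obtain ⟨x, rfl⟩ := hv₀K.1
          rw [rowA_apply, if_neg hi]
      have hz : v₀ = 0 := hVzero v₀ hv₀K.1 hvle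
      have hs := hv₀K.2
      rw [hz] at hs
      simp [Metric.mem_sphere] at hs
    have hαv : ∀ v ∈ LinearMap.range A, α * ‖v‖ ≤ g v := by
      intro v hv
      rcases eq_or_ne v 0 with rfl | hv0
      · simp [hg, Finset.sup'_const]
      · have hnv : 0 < ‖v‖ := norm_pos_iff.mpr hv0
        set u := ‖v‖⁻¹ • v with hu
        have huR : u ∈ LinearMap.range A := Submodule.smul_mem _ _ hv
        have hun : ‖u‖ = 1 := by
          rw [hu, norm_smul, norm_inv, norm_norm, inv_mul_cancel₀ hnv.ne']
        have huK : u ∈ K := ⟨huR, by simpa [Metric.mem_sphere] using hun⟩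
        have : α ≤ g u := hv₀min huK
        rw [hu, hgsmul _ (inv_nonneg.mpr hnv.le)] at this
        calc α * ‖v‖ ≤ (‖v‖⁻¹ * g v) * ‖v‖ := by
              exact mul_le_mul_of_nonneg_right this hnv.le
          _ = g v := by field_simp
    set qm := S.inf' hne q with hqm
    have hqmpos : 0 < qm := (Finset.lt_inf'_iff hne).mpr fun i _ => hq i
    have hhg : ∀ v : ι → ℝ, qm * Real.exp (g v) ≤ h v := by
      intro v
      obtain ⟨i, hiS, hsup⟩ := Finset.exists_mem_eq_sup' hne fun i => v i
      have hgvi : g v = v i := hsup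
      calc qm * Real.exp (g v) = qm * Real.exp (v i) := by rw [hgvi]
        _ ≤ q i * Real.exp (v i) :=
            mul_le_mul_of_nonneg_right (Finset.inf'_le _ hiS) (Real.exp_pos _).le
        _ ≤ h v := Finset.single_le_sum
            (fun i _ => mul_nonneg (hq i).le (Real.exp_pos _).le) hiS
    have hh0pos : 0 < h 0 := by
      rw [hh]
      simp only [Pi.zero_apply, Real.exp_zero, mul_one]
      exact Finset.sum_pos (fun i _ => hq i) hne
    set R := Real.log (h 0 / qm) / α with hR
    set C : Set (ι → ℝ) := (LinearMap.range A : Set (ι → ℝ)) ∩ {v | h v ≤ h 0} with hC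
    have hCcl : IsClosed C :=
      (Submodule.closed_of_finiteDimensional _).inter (isClosed_le hcont continuous_const)
    have hCsub : C ⊆ Metric.closedBall 0 R := by
      rintro v ⟨hvR, hvle⟩
      rw [Metric.mem_closedBall, dist_zero_right]
      have h1 : qm * Real.exp (α * ‖v‖) ≤ h 0 := by
        calc qm * Real.exp (α * ‖v‖) ≤ qm * Real.exp (g v) := by
              exact mul_le_mul_of_nonneg_left (Real.exp_le_exp.mpr (hαv v hvR)) hqmpos.le
          _ ≤ h v := hhg v
          _ ≤ h 0 := hvle
      have h2 : Real.exp (α * ‖v‖) ≤ h 0 / qm := by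
        rw [le_div_iff₀ hqmpos]; linarith [h1]
      have h3 : α * ‖v‖ ≤ Real.log (h 0 / qm) := by
        rw [← Real.log_exp (α * ‖v‖)]
        exact Real.log_le_log (Real.exp_pos _) h2
      rw [le_div_iff₀ hαpos]
      linarith [h3]
    have hCcomp : IsCompact C :=
      (isCompact_closedBall (0 : ι → ℝ) R).of_isClosed_subset hCcl hCsub
    have hC0 : (0 : ι → ℝ) ∈ C := ⟨Submodule.zero_mem _, by simp [Set.mem_setOf_eq]⟩
    obtain ⟨w, hwC, hwmin⟩ := hCcomp.exists_isMinOn ⟨0, hC0⟩ hcont.continuousOn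
    obtain ⟨x₀, hx₀⟩ := hwC.1
    refine ⟨x₀, fun y => ?_⟩
    rw [hfh, hfh, hx₀]
    by_cases hy : h (A y) ≤ h 0
    · exact hwmin ⟨LinearMap.mem_range_self _ _, hy⟩
    · push_neg at hy
      exact le_trans (hwmin hC0) hy.le
  · -- A = 0 case
    have hA0 : ∀ y : Fin n → ℝ, A y = 0 := by
      intro y
      by_contra hy0
      have hnv : 0 < ‖A y‖ := norm_pos_iff.mpr hy0
      exact hKne ⟨‖A y‖⁻¹ • A y,
        Submodule.smul_mem _ _ (LinearMap.mem_range_self _ _),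
        by simp [norm_smul, inv_mul_cancel₀ hnv.ne']⟩
    refine ⟨0, fun y => ?_⟩
    rw [hfh, hfh, hA0, hA0]

open Real in
lemma sage_at_min {n : ℕ} {ι : Type*} [Fintype ι] [DecidableEq ι]
    (d : ι → Fin n → ℝ) (q : ι → ℝ) (hq : ∀ i, 0 < q i) (S : Finset ι) (x₀ : Fin n → ℝ)
    (hmin : ∀ y : Fin n → ℝ,
      ∑ i ∈ S, q i * Real.exp (∑ k, d i k * x₀ k) ≤ ∑ i ∈ S, q i * Real.exp (∑ k, d i k * y k)) :
    ∃ ν : ι → ℝ, (∀ i, 0 ≤ ν i) ∧ (∀ i, i ∉ S → ν i = 0) ∧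
      (∀ k, ∑ i ∈ S, ν i * d i k = 0) ∧
      (∑ i ∈ S, ν i * Real.log (ν i / (Real.exp 1 * q i)))
        = -(∑ i ∈ S, q i * Real.exp (∑ k, d i k * x₀ k)) := by
  classical
  set c : ι → ℝ := fun i => ∑ k, d i k * x₀ k with hc
  set ν : ι → ℝ := fun i => if i ∈ S then q i * Real.exp (c i) else 0 with hν
  have hνS : ∀ i ∈ S, ν i = q i * Real.exp (c i) := fun i hi => if_pos hi
  have hgrad : ∀ k, ∑ i ∈ S, ν i * d i k = 0 := by
    intro k
    set φ : ℝ → ℝ := fun s => ∑ i ∈ S, q i * Real.exp (c i + s * d i k) with hφ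
    have hφeq : ∀ s : ℝ, φ s = ∑ i ∈ S, q i * Real.exp (∑ m, d i m * (x₀ m + s * (Pi.single k (1:ℝ) : Fin n → ℝ) m)) := by
      intro s
      refine Finset.sum_congr rfl fun i _ => ?_
      congr 1
      have : ∀ m, d i m * (x₀ m + s * (Pi.single k (1:ℝ) : Fin n → ℝ) m)
          = d i m * x₀ m + d i m * (s * (Pi.single k (1:ℝ) : Fin n → ℝ) m) := fun m => by ring
      have h2 : ∑ m, d i m * (s * (Pi.single k (1:ℝ) : Fin n → ℝ) m) = s * d i k := by
        rw [Finset.sum_congr rfl (fun m (_ : m ∈ Finset.univ) => by rw [Pi.single_apply])]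
        simp [mul_ite, Finset.sum_ite_eq', mul_comm]
      rw [Finset.sum_congr rfl fun m _ => this m, Finset.sum_add_distrib, h2]
    have hφmin : IsLocalMin φ 0 := by
      apply Filter.Eventually.of_forall
      intro s
      have h0 : φ 0 = ∑ i ∈ S, q i * Real.exp (c i) := by
        refine Finset.sum_congr rfl fun i _ => by rw [zero_mul, add_zero]
      rw [h0, hφeq s]
      exact hmin _
    have hder : HasDerivAt φ (∑ i ∈ S, ν i * d i k) 0 := by
      have : HasDerivAt φ (∑ i ∈ S, q i * (Real.exp (c i + 0 * d i k) * d i k)) 0 := by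
        apply HasDerivAt.fun_sum
        intro i _
        exact (((hasDerivAt_mul_const (d i k)).const_add (c i)).exp).const_mul (q i)
      convert this using 1
      refine Finset.sum_congr rfl fun i hi => ?_
      rw [hνS i hi, zero_mul, add_zero]
      ring
    have := hφmin.deriv_eq_zero
    rwa [hder.deriv] at this
  refine ⟨ν, ?_, ?_, hgrad, ?_⟩
  · intro i
    rw [hν]
    dsimp only
    split
    · exact mul_nonneg (hq _).le (Real.exp_pos _).le
    · exact le_rfl
  · intro i hi
    exact if_neg hi
  · have hDterm : ∀ i ∈ S, ν i * Real.log (ν i / (Real.exp 1 * q i)) = ν i * c i - ν i := by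
      intro i hi
      rw [hνS i hi]
      have : q i * Real.exp (c i) / (Real.exp 1 * q i) = Real.exp (c i - 1) := by
        rw [Real.exp_sub]
        field_simp [(hq i).ne']
      rw [this, Real.log_exp]
      ring
    rw [Finset.sum_congr rfl hDterm, Finset.sum_sub_distrib]
    have h1 : ∑ i ∈ S, ν i * c i = 0 := by
      have : ∀ i ∈ S, ν i * c i = ∑ m, (ν i * d i m) * x₀ m := by
        intro i _
        rw [hc]
        dsimp only
        rw [Finset.mul_sum]
        exact Finset.sum_congr rfl fun m _ => by ring
      rw [Finset.sum_congr rfl this, Finset.sum_comm]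
      rw [Finset.sum_congr rfl (fun m (_ : m ∈ Finset.univ) => by
        rw [← Finset.sum_mul, hgrad m, zero_mul])]
      simp
    have h2 : ∑ i ∈ S, ν i = ∑ i ∈ S, q i * Real.exp (∑ k, d i k * x₀ k) :=
      Finset.sum_congr rfl fun i hi => by rw [hνS i hi, hc]
    rw [h1, h2]
    ring

open Real in
lemma sage_core {n : ℕ} {ι : Type*} [Fintype ι] [DecidableEq ι]
    (d : ι → Fin n → ℝ) (q : ι → ℝ) (hq : ∀ i, 0 < q i) (S : Finset ι) :
    ∀ B : ℝ, (∀ x : Fin n → ℝ, B ≤ ∑ i ∈ S, q i * Real.exp (∑ k, d i k * x k)) →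
    ∃ ν : ι → ℝ, (∀ i, 0 ≤ ν i) ∧ (∀ i, i ∉ S → ν i = 0) ∧
      (∀ k, ∑ i ∈ S, ν i * d i k = 0) ∧
      (∑ i ∈ S, ν i * Real.log (ν i / (Real.exp 1 * q i))) ≤ -B := by
  classical
  induction S using Finset.strongInduction with
  | _ S ih =>
    intro B hB
    rcases S.eq_empty_or_nonempty with rfl | hne
    · refine ⟨0, fun i => le_rfl, fun i _ => rfl, by simp, ?_⟩
      simp only [Finset.sum_empty]
      have := hB 0
      simp at this
      linarith
    · by_cases hrec : ∃ x : Fin n → ℝ,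
        (∀ i ∈ S, (∑ k, d i k * x k) ≤ 0) ∧ (∃ i ∈ S, (∑ k, d i k * x k) < 0)
      · obtain ⟨xv, hle, i₀, hi₀S, hi₀⟩ := hrec
        set S₀ := S.filter (fun i => (∑ k, d i k * xv k) = 0) with hS₀
        have hss : S₀ ⊂ S := by
          refine Finset.filter_ssubset.mpr ⟨i₀, hi₀S, ?_⟩
          exact hi₀.ne
        have hB₀ : ∀ x : Fin n → ℝ, B ≤ ∑ i ∈ S₀, q i * Real.exp (∑ k, d i k * x k) := by
          intro x
          have hexp : ∀ (i : ι) (T : ℝ), (∑ k, d i k * (x k + T * xv k))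
              = (∑ k, d i k * x k) + T * ∑ k, d i k * xv k := by
            intro i T
            rw [Finset.mul_sum, ← Finset.sum_add_distrib]
            exact Finset.sum_congr rfl fun m _ => by ring
          have hlim : Filter.Tendsto
              (fun T : ℝ => ∑ i ∈ S, q i * Real.exp ((∑ k, d i k * x k) + T * ∑ k, d i k * xv k))
              Filter.atTop
              (nhds (∑ i ∈ S, if (∑ k, d i k * xv k) = 0
                then q i * Real.exp (∑ k, d i k * x k) else 0)) := by
            apply tendsto_finset_sum
            intro i hiS
            by_cases hsi : (∑ k, d i k * xv k) = 0
            · simp only [hsi, mul_zero, add_zero, if_pos]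
              exact tendsto_const_nhds
            · have hsilt : (∑ k, d i k * xv k) < 0 := lt_of_le_of_ne (hle i hiS) hsi
              simp only [hsi, if_false]
              have heq : ∀ T : ℝ, q i * Real.exp ((∑ k, d i k * x k) + T * ∑ k, d i k * xv k)
                  = (q i * Real.exp (∑ k, d i k * x k)) * Real.exp (T * ∑ k, d i k * xv k) := by
                intro T; rw [Real.exp_add]; ring
              rw [show (0:ℝ) = (q i * Real.exp (∑ k, d i k * x k)) * 0 by ring]
              refine Filter.Tendsto.congr (fun T => (heq T).symm) ?_
              refine Filter.Tendsto.const_mul _ ?_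
              refine Real.tendsto_exp_atBot.comp ?_
              exact Filter.Tendsto.atTop_mul_const_of_neg hsilt Filter.tendsto_id
          have hBall : ∀ T : ℝ, B ≤ ∑ i ∈ S, q i * Real.exp ((∑ k, d i k * x k) + T * ∑ k, d i k * xv k) := by
            intro T
            have := hB (fun k => x k + T * xv k)
            refine le_trans this (le_of_eq ?_)
            exact Finset.sum_congr rfl fun i _ => by rw [hexp i T]
          have hlimge := ge_of_tendsto hlim (Filter.Eventually.of_forall hBall)
          rw [hS₀, Finset.sum_filter]
          exact hlimge
        obtain ⟨ν, hν1, hν2, hν3, hν4⟩ := ih S₀ hss B hB₀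
        refine ⟨ν, hν1, fun i hi => hν2 i (fun hmem => hi (Finset.mem_of_mem_filter i hmem)), ?_, ?_⟩
        · intro k
          rw [← Finset.sum_subset (Finset.filter_subset _ S)
            (fun i _ hni => by rw [hν2 i hni, zero_mul])]
          exact hν3 k
        · rw [← Finset.sum_subset (Finset.filter_subset _ S)
            (fun i _ hni => by rw [hν2 i hni, zero_mul])]
          exact hν4
      · push_neg at hrec
        have hno : ∀ x : Fin n → ℝ, (∀ i ∈ S, (∑ k, d i k * x k) ≤ 0) →
            ∀ i ∈ S, (∑ k, d i k * x k) = 0 := by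
          intro x hx i hi
          exact le_antisymm (hx i hi) (hrec x hx i hi)
        obtain ⟨x₀, hmin⟩ := sage_min d q hq S hne hno
        obtain ⟨ν, hν1, hν2, hν3, hν4⟩ := sage_at_min d q hq S x₀ hmin
        exact ⟨ν, hν1, hν2, hν3, by rw [hν4]; linarith [hB x₀]⟩

/-- For `b` in the interior of the SAGE cone with `b - ε·(1,…,1)` SAGE, there is a SAGE
decomposition `(c, ν)` of `b` and a rational `0 < δ ≤ 1` such that
`D(ν^(j)_{∖j}, e·(c^(j)_{∖j} + δ·1)) + ε/2 ≤ c_j^(j)` for all `j`. -/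
theorem sage_slack_c
    (n t : ℕ) (a : Fin t → Fin n → ℕ) (b : Fin t → ℝ)
    (hb : b ∈ interior (CSage n t a))
    (ε : ℝ) (hε : 0 < ε)
    (hbe : (fun j => b j - ε) ∈ CSage n t a) :
    ∃ (c ν : Fin t → Fin t → ℝ) (δ : ℚ), 0 < δ ∧ δ ≤ 1 ∧
      (∀ i, ∑ j, c j i = b i) ∧
      (∀ j, ∀ k, ∑ i, (a i k : ℝ) * ν j i = 0) ∧
      (∀ j, ν j j = -∑ i ∈ Finset.univ.erase j, ν j i) ∧
      (∀ j i, i ≠ j → 0 ≤ ν j i ∧ 0 ≤ c j i) ∧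
      (∀ j, (∑ i ∈ Finset.univ.erase j,
          ν j i * Real.log (ν j i / (Real.exp 1 * (c j i + (δ : ℝ))))) + ε / 2 ≤ c j j) := by
  classical
  rcases Nat.eq_zero_or_pos t with ht0 | ht
  · refine ⟨0, 0, 1, one_pos, le_rfl, ?_, ?_, ?_, ?_, ?_⟩ <;>
      intro j <;> exact absurd j.isLt (by omega)
  obtain ⟨m, C, hCsum, hCage⟩ := hbe
  set j₀ : Fin t := ⟨0, ht⟩ with hj₀
  set φ : Fin m → Fin t := fun l => if h : ∃ i, C l i < 0 then h.choose else j₀ with hφ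
  have hφprop : ∀ l i, i ≠ φ l → 0 ≤ C l i := by
    intro l i hi
    by_contra hneg
    push_neg at hneg
    have hex : ∃ i', C l i' < 0 := ⟨i, hneg⟩
    have h1 : φ l = hex.choose := by rw [hφ]; exact dif_pos hex
    have h2 : i = hex.choose := (hCage l).2 hneg hex.choose_spec
    exact hi (h2 ▸ h1.symm ▸ rfl)
  set c : Fin t → Fin t → ℝ := fun j i =>
    (∑ l ∈ univ.filter (fun l => φ l = j), C l i) + (if i = j then ε else 0) with hc
  have hcol : ∀ i, ∑ j, c j i = b i := by
    intro i
    rw [hc]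
    simp only
    rw [Finset.sum_add_distrib,
      Finset.sum_fiberwise_of_maps_to (fun l _ => Finset.mem_univ (φ l)) (fun l => C l i),
      hCsum i]
    simp [Finset.sum_ite_eq]
  have hcnn : ∀ j i, i ≠ j → 0 ≤ c j i := by
    intro j i hij
    rw [hc]
    simp only [hij, if_false, add_zero]
    refine Finset.sum_nonneg fun l hl => ?_
    refine hφprop l i ?_
    rw [(Finset.mem_filter.mp hl).2]
    exact hij
  have hglower : ∀ j (x : Fin n → ℝ),
      ε * Real.exp (∑ k', (a j k' : ℝ) * x k') ≤ ∑ i, c j i * Real.exp (∑ k', (a i k' : ℝ) * x k') := by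
    intro j x
    have hsplit : ∑ i, c j i * Real.exp (∑ k', (a i k' : ℝ) * x k')
        = (∑ i, (∑ l ∈ univ.filter (fun l => φ l = j), C l i) * Real.exp (∑ k', (a i k' : ℝ) * x k'))
          + ε * Real.exp (∑ k', (a j k' : ℝ) * x k') := by
      rw [hc]
      simp only [add_mul, ite_mul, zero_mul, Finset.sum_add_distrib]
      congr 1
      simp [Finset.sum_ite_eq']
    have hpos : 0 ≤ ∑ i, (∑ l ∈ univ.filter (fun l => φ l = j), C l i) * Real.exp (∑ k', (a i k' : ℝ) * x k') := by
      have heq : ∑ i, (∑ l ∈ univ.filter (fun l => φ l = j), C l i) * Real.exp (∑ k', (a i k' : ℝ) * x k')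
          = ∑ l ∈ univ.filter (fun l => φ l = j), signomial n t a (C l) x := by
        simp only [Finset.sum_mul]
        rw [Finset.sum_comm]
        rfl
      rw [heq]
      exact Finset.sum_nonneg fun l _ => (hCage l).1 x
    linarith [hsplit, hpos]
  set q : Fin t → Fin t → ℝ := fun j i => (if i = j then 0 else c j i) + 1 with hqdef
  have hqpos : ∀ j i, 0 < q j i := by
    intro j i
    rw [hqdef]
    dsimp only
    split
    · norm_num
    · linarith [hcnn j i (by assumption)]
  set dd : Fin t → Fin t → Fin n → ℝ := fun j i k' => (a i k' : ℝ) - (a j k' : ℝ) with hdd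
  have hcore : ∀ j, ∃ ν : Fin t → ℝ, (∀ i, 0 ≤ ν i) ∧ (∀ i, i ∉ univ.erase j → ν i = 0) ∧
      (∀ k', ∑ i ∈ univ.erase j, ν i * dd j i k' = 0) ∧
      (∑ i ∈ univ.erase j, ν i * Real.log (ν i / (Real.exp 1 * q j i))) ≤ -(ε - c j j) := by
    intro j
    apply sage_core (dd j) (q j) (hqpos j) (univ.erase j) (ε - c j j)
    intro x
    set E := Real.exp (∑ k', (a j k' : ℝ) * x k') with hE
    have hEpos : 0 < E := Real.exp_pos _
    have hexp : ∀ i, Real.exp (∑ k', dd j i k' * x k')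
        = Real.exp (∑ k', (a i k' : ℝ) * x k') / E := by
      intro i
      rw [hE, ← Real.exp_sub]
      congr 1
      rw [← Finset.sum_sub_distrib]
      refine Finset.sum_congr rfl fun k' _ => ?_
      rw [hdd]
      ring
    have step1 : ∑ i ∈ univ.erase j, q j i * Real.exp (∑ k', dd j i k' * x k')
        = (∑ i ∈ univ.erase j, q j i * Real.exp (∑ k', (a i k' : ℝ) * x k')) / E := by
      rw [Finset.sum_div]
      exact Finset.sum_congr rfl fun i _ => by rw [hexp i, mul_div_assoc]
    have step2 : ∑ i ∈ univ.erase j, c j i * Real.exp (∑ k', (a i k' : ℝ) * x k')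
        ≤ ∑ i ∈ univ.erase j, q j i * Real.exp (∑ k', (a i k' : ℝ) * x k') := by
      refine Finset.sum_le_sum fun i hi => ?_
      have hij : q j i = c j i + 1 := by
        rw [hqdef]
        dsimp only
        rw [if_neg (Finset.ne_of_mem_erase hi)]
      rw [hij]
      have := (Real.exp_pos (∑ k', (a i k' : ℝ) * x k')).le
      nlinarith
    have step3 : ε * E - c j j * E ≤ ∑ i ∈ univ.erase j, c j i * Real.exp (∑ k', (a i k' : ℝ) * x k') := by
      have h1 := hglower j x
      have h2 := Finset.add_sum_erase Finset.univ
        (fun i => c j i * Real.exp (∑ k', (a i k' : ℝ) * x k')) (Finset.mem_univ j)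
      rw [hE]
      linarith
    rw [step1, le_div_iff₀ hEpos]
    nlinarith [step2, step3]
  choose N hN1 hN2 hN3 hN4 using hcore
  set ν : Fin t → Fin t → ℝ := fun j i =>
    if i = j then -∑ i' ∈ univ.erase j, N j i' else N j i with hνdef
  have hνoff : ∀ j i, i ≠ j → ν j i = N j i := fun j i h => if_neg h
  have hνdiag : ∀ j, ν j j = -∑ i' ∈ univ.erase j, N j i' := fun j => if_pos rfl
  refine ⟨c, ν, 1, one_pos, le_rfl, hcol, ?_, ?_, ?_, ?_⟩
  · intro j k'
    rw [← Finset.add_sum_erase Finset.univ (fun i => (a i k' : ℝ) * ν j i) (Finset.mem_univ j)]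
    have hrest : ∑ i ∈ univ.erase j, (a i k' : ℝ) * ν j i
        = ∑ i ∈ univ.erase j, (a i k' : ℝ) * N j i :=
      Finset.sum_congr rfl fun i hi => by rw [hνoff j i (Finset.ne_of_mem_erase hi)]
    have e1 : ∑ i ∈ univ.erase j, (a i k' : ℝ) * N j i
        - (∑ i ∈ univ.erase j, N j i) * (a j k' : ℝ) = 0 := by
      have h := hN3 j k'
      rw [Finset.sum_mul, ← Finset.sum_sub_distrib]
      refine Eq.trans (Finset.sum_congr rfl fun i _ => ?_) h
      rw [hdd]
      ring
    rw [hrest, hνdiag j]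
    linear_combination e1
  · intro j
    rw [hνdiag j]
    congr 1
    exact Finset.sum_congr rfl fun i hi => (hνoff j i (Finset.ne_of_mem_erase hi)).symm
  · intro j i hij
    rw [hνoff j i hij]
    exact ⟨hN1 j i, hcnn j i hij⟩
  · intro j
    have hsum : ∑ i ∈ univ.erase j, ν j i * Real.log (ν j i / (Real.exp 1 * (c j i + ((1:ℚ):ℝ))))
        = ∑ i ∈ univ.erase j, N j i * Real.log (N j i / (Real.exp 1 * q j i)) := by
      refine Finset.sum_congr rfl fun i hi => ?_
      have hij := Finset.ne_of_mem_erase hi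
      rw [hνoff j i hij]
      have : c j i + ((1:ℚ):ℝ) = q j i := by
        rw [hqdef]
        dsimp only
        rw [if_neg hij]
        norm_num
      rw [this]
    rw [hsum]
    linarith [hN4 j]
end

section
/- Fix exponents a(1),…,a(t) ∈ ℕ^n and let C_SAGE ⊆ ℝ^t be the cone of coefficient vectors b such that Σ_{j=1}^t b_j exp(a(j)·x) is a sum of AGE signomials supported on {a(1),…,a(t)}. Suppose b lies in the interior of C_SAGE and ε > 0 is such that b − ε·(1,…,1) ∈ C_SAGE. Then there exist vectors c^(1),…,c^(t), ν^(1),…,ν^(t) ∈ ℝ^t and a rational δ > 0 such that: Σ_{j=1}^t c^(j) = b; Σ_{i=1}^t a(i)·ν_i^(j) = 0 and ν_j^(j) = −Σ_{i≠j} ν_i^(j) for all j; ν_i^(j) ≥ 0 and c_i^(j) > 0 for all i ≠ j; and D(ν^(j)_{∖j} + δ·1, e·c^(j)_{∖j}) + ε/2 ≤ c_j^(j) for all j = 1,…,t, where ν^(j)_{∖j} denotes ν^(j) with its j-th entry removed and 1 is the all-ones vector in ℝ^{t−1}. -/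
open Finset

open Filter Topology
open scoped InnerProductSpace

set_option maxHeartbeats 1000000

open Finset Filter Topology
open scoped InnerProductSpace

private lemma exists_min_s8 {n : ℕ} {ι : Type*} [Fintype ι] [DecidableEq ι]
    (w : ι → EuclideanSpace ℝ (Fin n)) (d : ι → ℝ) (S : Finset ι) (hS : S.Nonempty)
    (hd : ∀ i ∈ S, 0 < d i)
    (hy : ∀ y : EuclideanSpace ℝ (Fin n), (∀ i ∈ S, ⟪w i, y⟫_ℝ ≤ 0) → ∀ i ∈ S, ⟪w i, y⟫_ℝ = 0) :
    ∃ x : EuclideanSpace ℝ (Fin n), ∀ z : EuclideanSpace ℝ (Fin n),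
      (∑ i ∈ S, d i * Real.exp ⟪w i, x⟫_ℝ) ≤ ∑ i ∈ S, d i * Real.exp ⟪w i, z⟫_ℝ := by
  classical
  by_cases hall : ∀ i ∈ S, w i = (0 : EuclideanSpace ℝ (Fin n))
  · refine ⟨0, fun z => le_of_eq ?_⟩
    refine Finset.sum_congr rfl fun i hi => ?_
    rw [hall i hi]
    simp
  · push_neg at hall
    obtain ⟨i₀, hi₀S, hi₀⟩ := hall
    set W : Submodule ℝ (EuclideanSpace ℝ (Fin n)) := Submodule.span ℝ (↑(S.image w)) with hW
    have hwW : ∀ i ∈ S, w i ∈ W := fun i hi =>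
      Submodule.subset_span (by simpa using Finset.mem_image_of_mem w hi)
    haveI : FiniteDimensional ℝ W := inferInstance
    -- the comparison function
    set φ : W → ℝ := fun u => ∑ i ∈ S, max (⟪w i, (u : EuclideanSpace ℝ (Fin n))⟫_ℝ) 0 with hφ
    have hφcont : Continuous φ := by
      apply continuous_finset_sum
      intro i _
      exact (Continuous.inner continuous_const continuous_subtype_val).max continuous_const
    have hφnonneg : ∀ u : W, 0 ≤ φ u := fun u =>
      Finset.sum_nonneg fun i _ => le_max_right _ _
    have hφpos : ∀ u : W, u ≠ 0 → 0 < φ u := by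
      intro u hu
      rcases lt_or_eq_of_le (hφnonneg u) with h | h
      · exact h
      exfalso
      have hterm : ∀ i ∈ S, max (⟪w i, (u : EuclideanSpace ℝ (Fin n))⟫_ℝ) 0 = 0 := by
        intro i hi
        have := (Finset.sum_eq_zero_iff_of_nonneg (fun i _ => le_max_right _ _)).1 h.symm
        exact this i hi
      have hle : ∀ i ∈ S, ⟪w i, (u : EuclideanSpace ℝ (Fin n))⟫_ℝ ≤ 0 := fun i hi =>
        le_of_max_le_left (le_of_eq (hterm i hi))
      have heq := hy (u : EuclideanSpace ℝ (Fin n)) hle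
      -- u ∈ W and orthogonal to all generators, hence u = 0
      have hmemo : W ≤ (ℝ ∙ (u : EuclideanSpace ℝ (Fin n)))ᗮ := by
        apply Submodule.span_le.2
        intro v hv
        simp only [Finset.coe_image, Set.mem_image, Finset.mem_coe] at hv
        obtain ⟨i, hi, rfl⟩ := hv
        rw [SetLike.mem_coe, Submodule.mem_orthogonal]
        intro z hz
        obtain ⟨c, rfl⟩ := Submodule.mem_span_singleton.1 hz
        rw [real_inner_smul_left, real_inner_comm, heq i hi, mul_zero]
      have : ⟪(u : EuclideanSpace ℝ (Fin n)), (u : EuclideanSpace ℝ (Fin n))⟫_ℝ = 0 := by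
        have := hmemo u.2
        rw [Submodule.mem_orthogonal] at this
        exact this _ (Submodule.mem_span_singleton_self _)
      exact hu (Subtype.ext (inner_self_eq_zero.1 this))
    -- minimum of φ on the unit sphere of W
    have hnormi₀ : ‖w i₀‖ ≠ 0 := norm_ne_zero_iff.2 hi₀
    have hsne : (Metric.sphere (0 : W) 1).Nonempty := by
      refine ⟨‖w i₀‖⁻¹ • ⟨w i₀, hwW i₀ hi₀S⟩, ?_⟩
      simp only [Metric.mem_sphere, dist_zero_right, norm_smul, norm_inv, Real.norm_eq_abs,
        abs_abs]
      have : ‖(⟨w i₀, hwW i₀ hi₀S⟩ : W)‖ = ‖w i₀‖ := rfl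
      rw [this, abs_of_nonneg (norm_nonneg _), inv_mul_cancel₀ hnormi₀]
    obtain ⟨u₁, hu₁mem, hu₁min'⟩ :=
      (isCompact_sphere (0 : W) 1).exists_isMinOn hsne hφcont.continuousOn
    have hu₁min : ∀ v ∈ Metric.sphere (0 : W) 1, φ u₁ ≤ φ v := fun v hv => hu₁min' hv
    have hu₁ : u₁ ≠ 0 := by
      intro h
      rw [Metric.mem_sphere, dist_zero_right, h, norm_zero] at hu₁mem
      norm_num at hu₁mem
    set β := φ u₁ with hβ
    have hβpos : 0 < β := hφpos u₁ hu₁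
    have hφβ : ∀ u : W, β * ‖u‖ ≤ φ u := by
      intro u
      rcases eq_or_ne u 0 with rfl | hu
      · simp [hφ, hφnonneg]
      · have hnu : (0:ℝ) < ‖u‖ := norm_pos_iff.2 hu
        have hmem : ‖u‖⁻¹ • u ∈ Metric.sphere (0 : W) 1 := by
          rw [Metric.mem_sphere, dist_zero_right, norm_smul, Real.norm_eq_abs,
            abs_of_nonneg (le_of_lt (inv_pos.2 hnu))]
          exact inv_mul_cancel₀ hnu.ne'
        have h1 : β ≤ φ (‖u‖⁻¹ • u) := hu₁min _ hmem
        have h2 : φ (‖u‖⁻¹ • u) = ‖u‖⁻¹ * φ u := by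
          rw [hφ, Finset.mul_sum]
          refine Finset.sum_congr rfl fun i hi => ?_
          have : ((‖u‖⁻¹ • u : W) : EuclideanSpace ℝ (Fin n)) = ‖u‖⁻¹ • (u : EuclideanSpace ℝ (Fin n)) := rfl
          rw [this, real_inner_smul_right, mul_max_of_nonneg _ _ (le_of_lt (inv_pos.2 hnu)),
            mul_zero]
        rw [h2] at h1
        calc β * ‖u‖ = ‖u‖ * β := mul_comm _ _
          _ ≤ ‖u‖ * (‖u‖⁻¹ * φ u) := by
              exact mul_le_mul_of_nonneg_left h1 (le_of_lt hnu)
          _ = φ u := by rw [← mul_assoc, mul_inv_cancel₀ hnu.ne', one_mul]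
    -- the objective function on W
    set G : W → ℝ :=
      fun u => ∑ i ∈ S, d i * Real.exp ⟪w i, (u : EuclideanSpace ℝ (Fin n))⟫_ℝ with hG
    have hGcont : Continuous G := by
      apply continuous_finset_sum
      intro i _
      exact continuous_const.mul (Real.continuous_exp.comp
        (Continuous.inner continuous_const continuous_subtype_val))
    obtain ⟨dm, hdmS, hdm⟩ := S.exists_min_image d hS
    have hdm0 : 0 < d dm := hd dm hdmS
    set s : ℝ := (S.card : ℝ) with hs
    have hs0 : (0:ℝ) < s := by
      rw [hs]
      exact_mod_cast Finset.card_pos.2 hS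
    have hlb : ∀ u : W, d dm * Real.exp ((β / s) * ‖u‖) - d dm ≤ G u := by
      intro u
      rcases eq_or_ne u 0 with rfl | hu
      · have h0 : (0:ℝ) ≤ G 0 := Finset.sum_nonneg fun i hi =>
          mul_nonneg (hd i hi).le (Real.exp_nonneg _)
        rw [norm_zero, mul_zero, Real.exp_zero, mul_one, sub_self]
        exact h0
      · have hsum : ∑ _i ∈ S, β * ‖u‖ / s ≤ ∑ i ∈ S, max (⟪w i, (u : EuclideanSpace ℝ (Fin n))⟫_ℝ) 0 := by
          rw [Finset.sum_const, nsmul_eq_mul]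
          have hcs : (S.card : ℝ) * (β * ‖u‖ / s) = β * ‖u‖ := by
            rw [← hs, mul_comm, div_mul_cancel₀ _ hs0.ne']
          rw [hcs]
          exact hφβ u
        obtain ⟨i₁, hi₁S, hi₁⟩ := Finset.exists_le_of_sum_le hS hsum
        have hnu : (0:ℝ) < ‖u‖ := norm_pos_iff.2 hu
        have hc : 0 < β * ‖u‖ / s := div_pos (mul_pos hβpos hnu) hs0
        have hinner : β * ‖u‖ / s ≤ ⟪w i₁, (u : EuclideanSpace ℝ (Fin n))⟫_ℝ := by
          rcases le_or_gt (⟪w i₁, (u : EuclideanSpace ℝ (Fin n))⟫_ℝ) 0 with h' | h'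
          · rw [max_eq_right h'] at hi₁; linarith
          · rwa [max_eq_left h'.le] at hi₁
        have hstep1 : d dm * Real.exp ((β / s) * ‖u‖) - d dm
            ≤ d dm * Real.exp (⟪w i₁, (u : EuclideanSpace ℝ (Fin n))⟫_ℝ) := by
          have hrw : (β / s) * ‖u‖ = β * ‖u‖ / s := by ring
          rw [hrw]
          have hee := Real.exp_le_exp.2 hinner
          nlinarith [Real.exp_pos (β * ‖u‖ / s)]
        have hstep2 : d dm * Real.exp (⟪w i₁, (u : EuclideanSpace ℝ (Fin n))⟫_ℝ) ≤ G u := by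
          have h1 : d i₁ * Real.exp (⟪w i₁, (u : EuclideanSpace ℝ (Fin n))⟫_ℝ) ≤ G u :=
            Finset.single_le_sum (f := fun i =>
              d i * Real.exp (⟪w i, (u : EuclideanSpace ℝ (Fin n))⟫_ℝ))
              (fun i hi => mul_nonneg (hd i hi).le (Real.exp_nonneg _)) hi₁S
          have h2 : d dm ≤ d i₁ := hdm i₁ hi₁S
          nlinarith [Real.exp_pos (⟪w i₁, (u : EuclideanSpace ℝ (Fin n))⟫_ℝ)]
        linarith
    have htend : Tendsto G (cocompact W) atTop := by
      have h1 : Tendsto (fun u : W => ‖u‖) (cocompact W) atTop := tendsto_norm_cocompact_atTop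
      have h2 : Tendsto (fun r : ℝ => d dm * Real.exp ((β / s) * r) - d dm) atTop atTop := by
        apply tendsto_atTop_add_const_right
        apply Tendsto.const_mul_atTop hdm0
        exact Real.tendsto_exp_atTop.comp
          (Tendsto.const_mul_atTop (div_pos hβpos hs0) tendsto_id)
      exact tendsto_atTop_mono hlb (h2.comp h1)
    obtain ⟨u₂, hu₂⟩ := hGcont.exists_forall_le htend
    refine ⟨(u₂ : EuclideanSpace ℝ (Fin n)), fun z => ?_⟩
    have hproj : ∀ i ∈ S, ⟪w i, z⟫_ℝ =
        ⟪w i, ((W.orthogonalProjection z : W) : EuclideanSpace ℝ (Fin n))⟫_ℝ := by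
      intro i hi
      have h3 : z - ↑(W.orthogonalProjection z) ∈ Wᗮ :=
        Submodule.sub_starProjection_mem_orthogonal (K := W) z
      have h4 := (Submodule.mem_orthogonal _ _).1 h3 (w i) (hwW i hi)
      rw [inner_sub_right] at h4
      linarith
    calc ∑ i ∈ S, d i * Real.exp ⟪w i, (u₂ : EuclideanSpace ℝ (Fin n))⟫_ℝ
        ≤ G (W.orthogonalProjection z) := hu₂ _
      _ = ∑ i ∈ S, d i * Real.exp ⟪w i, z⟫_ℝ := by
          refine Finset.sum_congr rfl fun i hi => ?_
          rw [hproj i hi]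

private lemma lemA {n : ℕ} {ι : Type*} [Fintype ι] [DecidableEq ι]
    (w : ι → EuclideanSpace ℝ (Fin n)) (d : ι → ℝ) (m : ℝ) :
    ∀ (N : ℕ) (S : Finset ι), S.card ≤ N → (∀ i ∈ S, 0 < d i) →
    (∀ x : EuclideanSpace ℝ (Fin n), m ≤ ∑ i ∈ S, d i * Real.exp ⟪w i, x⟫_ℝ) →
    ∃ ν : ι → ℝ, (∀ i, 0 ≤ ν i) ∧ (∀ i, ν i ≠ 0 → i ∈ S) ∧
      (∀ x : EuclideanSpace ℝ (Fin n), ∑ i, ν i * ⟪w i, x⟫_ℝ = 0) ∧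
      ∑ i ∈ S, ν i * Real.log (ν i / (Real.exp 1 * d i)) ≤ -m := by
  intro N
  induction N with
  | zero =>
    intro S hcard hd hlow
    have hSe : S = ∅ := Finset.card_eq_zero.1 (Nat.le_zero.1 hcard)
    subst hSe
    refine ⟨0, fun i => le_refl 0, fun i hi => absurd rfl hi, by simp, ?_⟩
    have h0 := hlow 0
    simp only [Finset.sum_empty] at h0 ⊢
    linarith
  | succ N ih =>
    intro S hcard hd hlow
    classical
    by_cases hy : ∃ y : EuclideanSpace ℝ (Fin n),
        (∀ i ∈ S, ⟪w i, y⟫_ℝ ≤ 0) ∧ ∃ i ∈ S, ⟪w i, y⟫_ℝ < 0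
    · obtain ⟨y, hy1, i₀, hi₀S, hi₀⟩ := hy
      set S₀ := S.filter (fun i => ⟪w i, y⟫_ℝ = 0) with hS₀
      have hsub : S₀ ⊆ S := Finset.filter_subset _ _
      have hi₀not : i₀ ∉ S₀ := fun h => absurd (Finset.mem_filter.1 h).2 (ne_of_lt hi₀)
      have hlt : S₀.card < S.card :=
        Finset.card_lt_card ⟨hsub, fun hsup => hi₀not (hsup hi₀S)⟩
      have hcard₀ : S₀.card ≤ N := by omega
      have hlow₀ : ∀ x, m ≤ ∑ i ∈ S₀, d i * Real.exp ⟪w i, x⟫_ℝ := by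
        intro x
        have hval : ∀ s' : ℝ,
            m ≤ ∑ i ∈ S, d i * Real.exp (⟪w i, x⟫_ℝ + s' * ⟪w i, y⟫_ℝ) := by
          intro s'
          have hl := hlow (x + s' • y)
          exact hl.trans_eq (Finset.sum_congr rfl fun i _ => by
            rw [inner_add_right, real_inner_smul_right])
        have htends : Tendsto
            (fun s' : ℝ => ∑ i ∈ S, d i * Real.exp (⟪w i, x⟫_ℝ + s' * ⟪w i, y⟫_ℝ))
            atTop (nhds (∑ i ∈ S₀, d i * Real.exp ⟪w i, x⟫_ℝ)) := by
          have hsum : ∑ i ∈ S₀, d i * Real.exp ⟪w i, x⟫_ℝ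
              = ∑ i ∈ S, (if ⟪w i, y⟫_ℝ = 0 then d i * Real.exp ⟪w i, x⟫_ℝ else 0) := by
            rw [hS₀, Finset.sum_filter]
          rw [hsum]
          apply tendsto_finset_sum
          intro i hi
          by_cases h0 : ⟪w i, y⟫_ℝ = 0
          · rw [if_pos h0]
            have : (fun s' : ℝ => d i * Real.exp (⟪w i, x⟫_ℝ + s' * ⟪w i, y⟫_ℝ))
                = fun _ : ℝ => d i * Real.exp ⟪w i, x⟫_ℝ := by
              funext s'; rw [h0, mul_zero, add_zero]
            rw [this]
            exact tendsto_const_nhds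
          · rw [if_neg h0]
            have hneg : ⟪w i, y⟫_ℝ < 0 := lt_of_le_of_ne (hy1 i hi) h0
            have h1 : Tendsto (fun s' : ℝ => ⟪w i, x⟫_ℝ + s' * ⟪w i, y⟫_ℝ) atTop atBot := by
              apply tendsto_atBot_add_const_left
              exact Tendsto.atTop_mul_const_of_neg hneg tendsto_id
            have h2 := (Real.tendsto_exp_atBot).comp h1
            have h3 := h2.const_mul (d i)
            simpa using h3
        exact ge_of_tendsto htends (Filter.Eventually.of_forall hval)
      obtain ⟨ν, h1, h2, h3, h4⟩ := ih S₀ hcard₀ (fun i hi => hd i (hsub hi)) hlow₀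
      refine ⟨ν, h1, fun i hi => hsub (h2 i hi), h3, ?_⟩
      have heq : ∑ i ∈ S, ν i * Real.log (ν i / (Real.exp 1 * d i))
          = ∑ i ∈ S₀, ν i * Real.log (ν i / (Real.exp 1 * d i)) := by
        symm
        apply Finset.sum_subset hsub
        intro i hiS hiN
        have hν0 : ν i = 0 := by
          by_contra h
          exact hiN (h2 i h)
        rw [hν0, zero_mul]
      rw [heq]
      exact h4
    · push_neg at hy
      have hy' : ∀ y : EuclideanSpace ℝ (Fin n),
          (∀ i ∈ S, ⟪w i, y⟫_ℝ ≤ 0) → ∀ i ∈ S, ⟪w i, y⟫_ℝ = 0 :=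
        fun y h i hi => le_antisymm (h i hi) (hy y h i hi)
      rcases S.eq_empty_or_nonempty with rfl | hS
      · refine ⟨0, fun i => le_refl 0, fun i hi => absurd rfl hi, by simp, ?_⟩
        have h0 := hlow 0
        simp only [Finset.sum_empty] at h0 ⊢
        linarith
      · obtain ⟨xs, hxs⟩ := exists_min_s8 w d S hS hd hy'
        have hder : HasFDerivAt (fun z => ∑ i ∈ S, d i * Real.exp ⟪w i, z⟫_ℝ)
            (∑ i ∈ S, (d i * Real.exp ⟪w i, xs⟫_ℝ) • (innerSL ℝ (w i))) xs := by
          apply HasFDerivAt.fun_sum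
          intro i hi
          have h1 : HasFDerivAt (fun z : EuclideanSpace ℝ (Fin n) => ⟪w i, z⟫_ℝ)
              (innerSL ℝ (w i)) xs := (innerSL ℝ (w i)).hasFDerivAt
          have h3 := (h1.exp).const_mul (d i)
          exact h3.congr_fderiv (smul_smul _ _ _)
        have hloc : IsLocalMin (fun z => ∑ i ∈ S, d i * Real.exp ⟪w i, z⟫_ℝ) xs :=
          Filter.Eventually.of_forall fun z => hxs z
        have hzero := hloc.hasFDerivAt_eq_zero hder
        have hzero' : ∀ v : EuclideanSpace ℝ (Fin n),
            ∑ i ∈ S, (d i * Real.exp ⟪w i, xs⟫_ℝ) * ⟪w i, v⟫_ℝ = 0 := by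
          intro v
          have hv := DFunLike.congr_fun hzero v
          simpa [ContinuousLinearMap.sum_apply, ContinuousLinearMap.smul_apply,
            smul_eq_mul] using hv
        refine ⟨fun i => if i ∈ S then d i * Real.exp ⟪w i, xs⟫_ℝ else 0, ?_, ?_, ?_, ?_⟩
        · intro i
          dsimp only
          by_cases hi : i ∈ S
          · rw [if_pos hi]
            exact mul_nonneg (hd i hi).le (Real.exp_nonneg _)
          · rw [if_neg hi]
        · intro i hi
          dsimp only at hi
          by_contra h
          exact hi (by rw [if_neg h])
        · intro v
          dsimp only
          have hsplit : ∑ i, (if i ∈ S then d i * Real.exp ⟪w i, xs⟫_ℝ else 0) * ⟪w i, v⟫_ℝ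
              = ∑ i ∈ S, (d i * Real.exp ⟪w i, xs⟫_ℝ) * ⟪w i, v⟫_ℝ := by
            simp only [ite_mul, zero_mul]
            rw [Finset.sum_ite_mem, Finset.univ_inter]
          rw [hsplit, hzero' v]
        · dsimp only
          have hterm : ∀ i ∈ S, (if i ∈ S then d i * Real.exp ⟪w i, xs⟫_ℝ else 0) *
              Real.log ((if i ∈ S then d i * Real.exp ⟪w i, xs⟫_ℝ else 0) /
                (Real.exp 1 * d i))
              = (d i * Real.exp ⟪w i, xs⟫_ℝ) * (⟪w i, xs⟫_ℝ - 1) := by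
            intro i hi
            rw [if_pos hi]
            congr 1
            have hd0 : d i ≠ 0 := (hd i hi).ne'
            have hq : d i * Real.exp ⟪w i, xs⟫_ℝ / (Real.exp 1 * d i)
                = Real.exp ⟪w i, xs⟫_ℝ / Real.exp 1 := by
              rw [mul_comm (Real.exp 1) (d i), mul_div_mul_left _ _ hd0]
            rw [hq, Real.log_div (Real.exp_ne_zero _) (Real.exp_ne_zero _),
              Real.log_exp, Real.log_exp]
          rw [Finset.sum_congr rfl hterm]
          have hexpand : ∑ i ∈ S, (d i * Real.exp ⟪w i, xs⟫_ℝ) * (⟪w i, xs⟫_ℝ - 1)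
              = (∑ i ∈ S, (d i * Real.exp ⟪w i, xs⟫_ℝ) * ⟪w i, xs⟫_ℝ)
                - ∑ i ∈ S, d i * Real.exp ⟪w i, xs⟫_ℝ := by
            rw [← Finset.sum_sub_distrib]
            exact Finset.sum_congr rfl fun i _ => by ring
          rw [hexpand, hzero' xs, zero_sub, neg_le_neg_iff]
          exact hlow xs

private lemma inner_euc {n : ℕ} (v x : EuclideanSpace ℝ (Fin n)) :
    ⟪v, x⟫_ℝ = ∑ k, v k * x k := by
  simp [PiLp.inner_apply, RCLike.inner_apply, mul_comm]

private lemma inner_single_euc {n : ℕ} (v : EuclideanSpace ℝ (Fin n)) (k : Fin n) :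
    ⟪v, EuclideanSpace.single k (1:ℝ)⟫_ℝ = v k := by
  simp [PiLp.inner_apply, RCLike.inner_apply, EuclideanSpace.single_apply]

private lemma lemB {n t : ℕ} (a : Fin t → Fin n → ℕ) (j : Fin t) (e : Fin t → ℝ)
    (hpos : ∀ i, i ≠ j → 0 ≤ e i)
    (hnn : ∀ x : Fin n → ℝ, 0 ≤ ∑ i, e i * Real.exp (∑ k, (a i k : ℝ) * x k)) :
    ∃ ν : Fin t → ℝ,
      (∀ i, i ≠ j → 0 ≤ ν i) ∧
      (∀ i, i ≠ j → ν i ≠ 0 → 0 < e i) ∧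
      (∀ k, ∑ i, (a i k : ℝ) * ν i = 0) ∧
      (ν j = -∑ i ∈ Finset.univ.erase j, ν i) ∧
      (∑ i ∈ Finset.univ.erase j, ν i * Real.log (ν i / (Real.exp 1 * e i)) ≤ e j) := by
  classical
  set w : Fin t → EuclideanSpace ℝ (Fin n) :=
    fun i => (WithLp.toLp 2 (fun k => (a i k : ℝ) - (a j k : ℝ)) : EuclideanSpace ℝ (Fin n)) with hw
  have hwk : ∀ i k, w i k = (a i k : ℝ) - (a j k : ℝ) := fun i k => rfl
  set S : Finset (Fin t) := (Finset.univ.erase j).filter (fun i => 0 < e i) with hS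
  have hdS : ∀ i ∈ S, 0 < e i := fun i hi => (Finset.mem_filter.1 hi).2
  have hSerase : S ⊆ Finset.univ.erase j := Finset.filter_subset _ _
  have hSj : j ∉ S := fun h => (Finset.mem_erase.1 (hSerase h)).1 rfl
  have hlow : ∀ x : EuclideanSpace ℝ (Fin n),
      -e j ≤ ∑ i ∈ S, e i * Real.exp ⟪w i, x⟫_ℝ := by
    intro x
    have h0 := hnn (fun k => x k)
    have key : (0:ℝ) ≤ ∑ i, e i * Real.exp ⟪w i, x⟫_ℝ := by
      have hfac : ∀ i : Fin t, e i * Real.exp ⟪w i, x⟫_ℝ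
          = (e i * Real.exp (∑ k, (a i k : ℝ) * x k)) *
            Real.exp (-(∑ k, (a j k : ℝ) * x k)) := by
        intro i
        rw [inner_euc, mul_assoc, ← Real.exp_add]
        congr 2
        have hterm : ∀ k, w i k * x k = (a i k : ℝ) * x k - (a j k : ℝ) * x k :=
          fun k => by rw [hwk]; ring
        rw [Finset.sum_congr rfl fun k _ => hterm k, Finset.sum_sub_distrib, sub_eq_add_neg]
      calc (0:ℝ) ≤ (∑ i, e i * Real.exp (∑ k, (a i k : ℝ) * x k)) *
            Real.exp (-(∑ k, (a j k : ℝ) * x k)) := mul_nonneg h0 (Real.exp_nonneg _)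
        _ = ∑ i, e i * Real.exp ⟪w i, x⟫_ℝ := by
            rw [Finset.sum_mul]
            exact Finset.sum_congr rfl fun i _ => (hfac i).symm
    have hsplit : ∑ i, e i * Real.exp ⟪w i, x⟫_ℝ
        = e j + ∑ i ∈ Finset.univ.erase j, e i * Real.exp ⟪w i, x⟫_ℝ := by
      rw [← Finset.add_sum_erase _ _ (Finset.mem_univ j)]
      congr 1
      have hwj : ⟪w j, x⟫_ℝ = 0 := by
        rw [inner_euc]
        apply Finset.sum_eq_zero
        intro k _
        rw [hwk, sub_self, zero_mul]
      rw [hwj, Real.exp_zero, mul_one]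
    have hS2 : ∑ i ∈ Finset.univ.erase j, e i * Real.exp ⟪w i, x⟫_ℝ
        = ∑ i ∈ S, e i * Real.exp ⟪w i, x⟫_ℝ := by
      symm
      apply Finset.sum_subset hSerase
      intro i hie hiS
      have hi0 : e i = 0 := by
        have h1 : ¬ 0 < e i := fun h => hiS (Finset.mem_filter.2 ⟨hie, h⟩)
        have h2 : 0 ≤ e i := hpos i (Finset.mem_erase.1 hie).1
        linarith
      rw [hi0, zero_mul]
    rw [hsplit, hS2] at key
    linarith
  obtain ⟨ν', h1, h2, h3, h4⟩ := lemA w e (-e j) S.card S le_rfl hdS hlow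
  have hν'j : ν' j = 0 := by
    by_contra h
    exact hSj (h2 j h)
  have hν'0 : ∀ i ∈ Finset.univ.erase j, i ∉ S → ν' i = 0 := by
    intro i _ hiS
    by_contra h
    exact hiS (h2 i h)
  refine ⟨fun i => if i = j then -∑ i' ∈ Finset.univ.erase j, ν' i' else ν' i,
    ?_, ?_, ?_, ?_, ?_⟩
  · intro i hij
    dsimp only
    rw [if_neg hij]
    exact h1 i
  · intro i hij hne
    dsimp only at hne
    rw [if_neg hij] at hne
    exact hdS i (h2 i hne)
  · intro k
    dsimp only
    have hx := h3 (EuclideanSpace.single k 1)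
    have hx' : ∑ i, ν' i * ((a i k : ℝ) - (a j k : ℝ)) = 0 := by
      rw [← hx]
      exact Finset.sum_congr rfl fun i _ => by rw [inner_single_euc, hwk]
    have hx'' : ∑ i ∈ Finset.univ.erase j, ν' i * ((a i k : ℝ) - (a j k : ℝ)) = 0 := by
      rw [← hx']
      apply Finset.sum_subset (Finset.subset_univ _)
      intro i _ hi
      have : i = j := by simpa using hi
      rw [this, hν'j, zero_mul]
    have expand : ∑ i ∈ Finset.univ.erase j, ν' i * ((a i k : ℝ) - (a j k : ℝ))
        = (∑ i ∈ Finset.univ.erase j, (a i k : ℝ) * ν' i)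
          - (a j k : ℝ) * ∑ i ∈ Finset.univ.erase j, ν' i := by
      rw [Finset.mul_sum, ← Finset.sum_sub_distrib]
      exact Finset.sum_congr rfl fun i _ => by ring
    rw [← Finset.add_sum_erase _ _ (Finset.mem_univ j), if_pos rfl]
    have e1 : ∑ i ∈ Finset.univ.erase j,
        (a i k : ℝ) * (if i = j then -∑ i' ∈ Finset.univ.erase j, ν' i' else ν' i)
        = ∑ i ∈ Finset.univ.erase j, (a i k : ℝ) * ν' i := by
      exact Finset.sum_congr rfl fun i hi => by rw [if_neg (Finset.mem_erase.1 hi).1]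
    rw [e1]
    rw [expand] at hx''
    ring_nf
    ring_nf at hx''
    linarith
  · dsimp only
    rw [if_pos rfl]
    congr 1
    exact Finset.sum_congr rfl fun i hi => by rw [if_neg (Finset.mem_erase.1 hi).1]
  · dsimp only
    have hsum : ∑ i ∈ Finset.univ.erase j,
        (if i = j then -∑ i' ∈ Finset.univ.erase j, ν' i' else ν' i) *
          Real.log ((if i = j then -∑ i' ∈ Finset.univ.erase j, ν' i' else ν' i) /
            (Real.exp 1 * e i))
        = ∑ i ∈ Finset.univ.erase j, ν' i * Real.log (ν' i / (Real.exp 1 * e i)) := by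
      refine Finset.sum_congr rfl fun i hi => by rw [if_neg (Finset.mem_erase.1 hi).1]
    rw [hsum]
    have hsum2 : ∑ i ∈ Finset.univ.erase j, ν' i * Real.log (ν' i / (Real.exp 1 * e i))
        = ∑ i ∈ S, ν' i * Real.log (ν' i / (Real.exp 1 * e i)) := by
      symm
      apply Finset.sum_subset hSerase
      intro i hie hiS
      rw [hν'0 i hie hiS, zero_mul]
    rw [hsum2]
    calc ∑ i ∈ S, ν' i * Real.log (ν' i / (Real.exp 1 * e i)) ≤ -(-e j) := h4
      _ = e j := neg_neg _

private lemma term_bound {u δ A B : ℝ} (hu : 0 ≤ u) (hδ0 : 0 < δ) (hδ1 : δ ≤ 1)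
    (hA : 0 < A) (hBA : B ≤ A) (hB : u ≠ 0 → 0 < B) :
    (u + δ) * Real.log ((u + δ) / (Real.exp 1 * A)) ≤
      u * Real.log (u / (Real.exp 1 * B)) + δ * (Real.log (u + 1) + |Real.log A|) := by
  have huδ : 0 < u + δ := by linarith
  have hEA : (0:ℝ) < Real.exp 1 * A := mul_pos (Real.exp_pos 1) hA
  have hlog1 : Real.log ((u + δ) / (Real.exp 1 * A))
      = Real.log (u + δ) - 1 - Real.log A := by
    rw [Real.log_div huδ.ne' hEA.ne', Real.log_mul (Real.exp_ne_zero 1) hA.ne', Real.log_exp]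
    ring
  rcases eq_or_lt_of_le hu with h0 | h0
  · rw [hlog1, ← h0]
    simp only [zero_add, zero_mul, Real.log_one]
    have hld : Real.log δ ≤ 0 := Real.log_nonpos hδ0.le hδ1
    have habs : -Real.log A ≤ |Real.log A| := neg_le_abs _
    nlinarith [mul_nonpos_of_nonneg_of_nonpos hδ0.le hld,
      mul_le_mul_of_nonneg_left habs hδ0.le]
  · have hBpos : 0 < B := hB h0.ne'
    have hEB : (0:ℝ) < Real.exp 1 * B := mul_pos (Real.exp_pos 1) hBpos
    have hlog2 : Real.log (u / (Real.exp 1 * B)) = Real.log u - 1 - Real.log B := by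
      rw [Real.log_div h0.ne' hEB.ne', Real.log_mul (Real.exp_ne_zero 1) hBpos.ne',
        Real.log_exp]
      ring
    rw [hlog1, hlog2]
    have key1 : u * (Real.log (u + δ) - Real.log u) ≤ δ := by
      have h5 : Real.log ((u + δ) / u) ≤ (u + δ) / u - 1 :=
        Real.log_le_sub_one_of_pos (div_pos huδ h0)
      rw [Real.log_div huδ.ne' h0.ne'] at h5
      have h6 : (u + δ) / u - 1 = δ / u := by field_simp; ring
      rw [h6] at h5
      calc u * (Real.log (u + δ) - Real.log u) ≤ u * (δ / u) :=
            mul_le_mul_of_nonneg_left h5 hu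
        _ = δ := by field_simp
    have key2 : Real.log (u + δ) ≤ Real.log (u + 1) := Real.log_le_log huδ (by linarith)
    have key3 : Real.log B ≤ Real.log A := Real.log_le_log hBpos hBA
    have key4 : -Real.log A ≤ |Real.log A| := neg_le_abs _
    nlinarith [mul_le_mul_of_nonneg_left key2 hδ0.le,
      mul_le_mul_of_nonneg_left key3 hu,
      mul_le_mul_of_nonneg_left key4 hδ0.le]

/-- For `b` in the interior of the SAGE cone with `b - ε·(1,…,1)` SAGE, there is a SAGE
decomposition `(c, ν)` of `b` and a rational `δ > 0` such that
`D(ν^(j)_{∖j} + δ·1, e·c^(j)_{∖j}) + ε/2 ≤ c_j^(j)` for all `j`. -/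
theorem sage_slack_nu
    (n t : ℕ) (a : Fin t → Fin n → ℕ) (b : Fin t → ℝ)
    (hb : b ∈ interior (CSage n t a))
    (ε : ℝ) (hε : 0 < ε)
    (hbe : (fun j => b j - ε) ∈ CSage n t a) :
    ∃ (c ν : Fin t → Fin t → ℝ) (δ : ℚ), 0 < δ ∧
      (∀ i, ∑ j, c j i = b i) ∧
      (∀ j, ∀ k, ∑ i, (a i k : ℝ) * ν j i = 0) ∧
      (∀ j, ν j j = -∑ i ∈ Finset.univ.erase j, ν j i) ∧
      (∀ j i, i ≠ j → 0 ≤ ν j i ∧ 0 < c j i) ∧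
      (∀ j, (∑ i ∈ Finset.univ.erase j,
          (ν j i + (δ : ℝ)) * Real.log ((ν j i + (δ : ℝ)) / (Real.exp 1 * c j i)))
        + ε / 2 ≤ c j j) := by
  classical
  rcases Nat.eq_zero_or_pos t with ht0 | ht
  · subst ht0
    exact ⟨0, 0, 1, one_pos, fun i => i.elim0, fun j => j.elim0, fun j => j.elim0,
      fun j => j.elim0, fun j => j.elim0⟩
  · obtain ⟨K, d, hdsum, hdage⟩ := hbe
    have htR : (1:ℝ) ≤ (t:ℝ) := by exact_mod_cast ht
    set η : ℝ := ε / (2 * t) with hη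
    have hηpos : 0 < η := div_pos hε (by positivity)
    have hteq : (t:ℝ) * η = ε / 2 := by
      rw [hη]
      field_simp
    have hchoice : ∀ p : Fin K, ∃ jp : Fin t, ∀ i, i ≠ jp → 0 ≤ d p i := by
      intro p
      by_cases h : ∃ i, d p i < 0
      · obtain ⟨i0, hi0⟩ := h
        refine ⟨i0, fun i hi => ?_⟩
        by_contra hneg
        push_neg at hneg
        exact hi ((hdage p).2 hneg hi0)
      · push_neg at h
        exact ⟨⟨0, ht⟩, fun i _ => h i⟩
    choose jp hjp using hchoice
    set c' : Fin t → Fin t → ℝ :=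
      fun j i => ∑ p ∈ Finset.univ.filter (fun p => jp p = j), d p i with hc'
    have hc'sum : ∀ i, ∑ j, c' j i = b i - ε := by
      intro i
      rw [hc']
      dsimp only
      rw [Finset.sum_fiberwise]
      exact hdsum i
    have hc'pos : ∀ j, ∀ i, i ≠ j → 0 ≤ c' j i := by
      intro j i hij
      apply Finset.sum_nonneg
      intro p hp
      have hpj : jp p = j := (Finset.mem_filter.1 hp).2
      exact hjp p i (by rw [hpj]; exact hij)
    have hc'nn : ∀ j, ∀ x : Fin n → ℝ,
        0 ≤ ∑ i, c' j i * Real.exp (∑ k, (a i k : ℝ) * x k) := by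
      intro j x
      have hswap : ∑ i, c' j i * Real.exp (∑ k, (a i k : ℝ) * x k)
          = ∑ p ∈ Finset.univ.filter (fun p => jp p = j),
              ∑ i, d p i * Real.exp (∑ k, (a i k : ℝ) * x k) := by
        rw [hc']
        dsimp only
        simp_rw [Finset.sum_mul]
        rw [Finset.sum_comm]
      rw [hswap]
      apply Finset.sum_nonneg
      intro p _
      simpa [signomial] using (hdage p).1 x
    have hν := fun j => lemB a j (c' j) (hc'pos j) (hc'nn j)
    choose ν hν1 hν2 hν3 hν4 hν5 using hν
    set c : Fin t → Fin t → ℝ :=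
      fun j i => c' j i + (if i = j then ε - ((t:ℝ) - 1) * η else η) with hc
    have hcdiag : ∀ j, c j j = c' j j + (ε - ((t:ℝ) - 1) * η) := by
      intro j
      rw [hc]
      dsimp only
      rw [if_pos rfl]
    have hcoff : ∀ j i, i ≠ j → c j i = c' j i + η := by
      intro j i hij
      rw [hc]
      dsimp only
      rw [if_neg hij]
    have hcpos : ∀ j i, i ≠ j → 0 < c j i := by
      intro j i hij
      rw [hcoff j i hij]
      have := hc'pos j i hij
      linarith
    -- constants for the δ-perturbation
    set Cf : Fin t → ℝ := fun j => ∑ i ∈ Finset.univ.erase j,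
      (Real.log (ν j i + 1) + |Real.log (c j i)|) with hCf
    have hCf0 : ∀ j, 0 ≤ Cf j := by
      intro j
      apply Finset.sum_nonneg
      intro i hi
      have hνnn := hν1 j i (Finset.mem_erase.1 hi).1
      have h1 : 0 ≤ Real.log (ν j i + 1) := Real.log_nonneg (by linarith)
      have h2 : 0 ≤ |Real.log (c j i)| := abs_nonneg _
      linarith
    set Ct : ℝ := ∑ j, Cf j with hCt
    have hCtub : ∀ j, Cf j ≤ Ct := fun j =>
      Finset.single_le_sum (fun i _ => hCf0 i) (Finset.mem_univ j)
    have hCt0 : 0 ≤ Ct := Finset.sum_nonneg fun j _ => hCf0 j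
    have hδ₀pos : 0 < min 1 ((ε / (2 * t)) / (Ct + 1)) := by
      apply lt_min one_pos
      apply div_pos (div_pos hε (by positivity)) (by linarith)
    obtain ⟨q, hq0, hq1⟩ := exists_rat_btwn hδ₀pos
    have hq0' : (0:ℝ) < (q:ℝ) := by exact_mod_cast hq0
    have hq1' : (q:ℝ) ≤ 1 := le_of_lt (lt_of_lt_of_le hq1 (min_le_left _ _))
    have hqC : ∀ j, (q:ℝ) * Cf j ≤ ε / (2 * t) := by
      intro j
      have h1 : (q:ℝ) * Cf j ≤ (q:ℝ) * (Ct + 1) := by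
        apply mul_le_mul_of_nonneg_left _ hq0'.le
        have := hCtub j
        linarith
      have h2 : (q:ℝ) ≤ (ε / (2 * t)) / (Ct + 1) :=
        le_of_lt (lt_of_lt_of_le hq1 (min_le_right _ _))
      have h3 : (q:ℝ) * (Ct + 1) ≤ (ε / (2 * t)) / (Ct + 1) * (Ct + 1) :=
        mul_le_mul_of_nonneg_right h2 (by linarith)
      have h4 : (ε / (2 * t)) / (Ct + 1) * (Ct + 1) = ε / (2 * t) := by
        field_simp
      linarith
    refine ⟨c, ν, q, by exact_mod_cast hq0, ?_, hν3, hν4, ?_, ?_⟩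
    · -- column sums
      intro i
      have hsplit : ∑ j, c j i = (∑ j, c' j i) +
          ∑ j, (if i = j then ε - ((t:ℝ) - 1) * η else η) := by
        rw [hc]
        dsimp only
        rw [Finset.sum_add_distrib]
      rw [hsplit, hc'sum i]
      have hite : ∑ j, (if i = j then ε - ((t:ℝ) - 1) * η else η) = ε := by
        rw [← Finset.add_sum_erase _ _ (Finset.mem_univ i), if_pos rfl]
        have herase : ∑ j ∈ Finset.univ.erase i,
            (if i = j then ε - ((t:ℝ) - 1) * η else η)
            = ∑ _j ∈ Finset.univ.erase i, η :=
          Finset.sum_congr rfl fun j hj => by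
            rw [if_neg fun h => (Finset.mem_erase.1 hj).1 h.symm]
        rw [herase, Finset.sum_const, Finset.card_erase_of_mem (Finset.mem_univ i),
          Finset.card_univ, Fintype.card_fin, nsmul_eq_mul]
        have hcast : ((t - 1 : ℕ) : ℝ) = (t:ℝ) - 1 := by
          rw [Nat.cast_sub ht, Nat.cast_one]
        rw [hcast]
        ring
      rw [hite]
      ring
    · intro j i hij
      exact ⟨hν1 j i hij, hcpos j i hij⟩
    · intro j
      have hstep1 : ∑ i ∈ Finset.univ.erase j,
          (ν j i + (q:ℝ)) * Real.log ((ν j i + (q:ℝ)) / (Real.exp 1 * c j i))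
          ≤ ∑ i ∈ Finset.univ.erase j,
            (ν j i * Real.log (ν j i / (Real.exp 1 * c' j i)) +
              (q:ℝ) * (Real.log (ν j i + 1) + |Real.log (c j i)|)) := by
        apply Finset.sum_le_sum
        intro i hi
        have hij := (Finset.mem_erase.1 hi).1
        have hBA : c' j i ≤ c j i := by
          rw [hcoff j i hij]
          linarith
        exact term_bound (hν1 j i hij) hq0' hq1' (hcpos j i hij) hBA
          (fun hne => hν2 j i hij hne)
      have hstep2 : ∑ i ∈ Finset.univ.erase j,
          (ν j i * Real.log (ν j i / (Real.exp 1 * c' j i)) +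
            (q:ℝ) * (Real.log (ν j i + 1) + |Real.log (c j i)|))
          = (∑ i ∈ Finset.univ.erase j,
              ν j i * Real.log (ν j i / (Real.exp 1 * c' j i))) + (q:ℝ) * Cf j := by
        rw [Finset.sum_add_distrib, hCf]
        dsimp only
        rw [Finset.mul_sum]
      have hstep3 := hν5 j
      have hstep4 := hqC j
      have hfin : ε / (2 * t) = η := rfl
      rw [hcdiag j]
      calc (∑ i ∈ Finset.univ.erase j,
            (ν j i + (q:ℝ)) * Real.log ((ν j i + (q:ℝ)) / (Real.exp 1 * c j i))) + ε / 2
          ≤ ((∑ i ∈ Finset.univ.erase j,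
              ν j i * Real.log (ν j i / (Real.exp 1 * c' j i))) + (q:ℝ) * Cf j) + ε / 2 := by
            have := hstep1.trans_eq hstep2
            linarith
        _ ≤ (c' j j + η) + ε / 2 := by
            have h5 : (q:ℝ) * Cf j ≤ η := by rw [← hfin]; exact hstep4
            linarith
        _ ≤ c' j j + (ε - ((t:ℝ) - 1) * η) := by
            have : ((t:ℝ) - 1) * η + η = ε / 2 := by
              rw [← hteq]; ring
            linarith
end

section
/- Fix exponents a(1),…,a(t) ∈ ℕ^n and let C_SAGE ⊆ ℝ^t be the cone of coefficient vectors b such that Σ_{j=1}^t b_j exp(a(j)·x) is a sum of AGE signomials supported on {a(1),…,a(t)}. Suppose b lies in the interior of C_SAGE and ε > 0 is such that b − ε·(1,…,1) ∈ C_SAGE. Then there exist vectors c^(1),…,c^(t), ν^(1),…,ν^(t) ∈ ℝ^t and a rational δ > 0 such that: Σ_{j=1}^t c^(j) = b; Σ_{i=1}^t a(i)·ν_i^(j) = 0 and ν_j^(j) = −Σ_{i≠j} ν_i^(j) for all j; ν_i^(j) ≥ 0 and c_i^(j) > 0 for all i ≠ j; and D((1+δ)·ν^(j)_{∖j}, e·c^(j)_{∖j})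 + ε/2 ≤ c_j^(j) for all j = 1,…,t, where ν^(j)_{∖j} denotes ν^(j) with its j-th entry removed. -/
open Finset

open Finset Filter Topology RealInnerProductSpace

lemma continuous_finset_sup' {α ι : Type*} [TopologicalSpace α] {S : Finset ι} (hS : S.Nonempty)
    {f : ι → α → ℝ} (hf : ∀ i, Continuous (f i)) :
    Continuous fun x => S.sup' hS fun i => f i x := by
  induction hS using Finset.Nonempty.cons_induction with
  | singleton i =>
      simp only [Finset.sup'_singleton]
      exact hf i
  | cons i s his hs ih =>
      have : ∀ x, (Finset.cons i s his).sup' (Finset.cons_nonempty his) (fun j => f j x)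
          = max (f i x) (s.sup' hs fun j => f j x) := fun x => Finset.sup'_cons hs _
      simp only [this]
      exact (hf i).max ih

set_option maxHeartbeats 1000000 in
lemma key {n : ℕ} {ι : Type*} [DecidableEq ι] :
    ∀ (S : Finset ι) (β : ι → Fin n → ℝ) (c : ι → ℝ), (∀ i ∈ S, 0 < c i) →
    ∀ M : ℝ, (∀ x : Fin n → ℝ, -M ≤ ∑ i ∈ S, c i * Real.exp (∑ k, β i k * x k)) →
    ∃ ν : ι → ℝ, (∀ i ∉ S, ν i = 0) ∧ (∀ i ∈ S, 0 ≤ ν i) ∧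
      (∀ k, ∑ i ∈ S, ν i * β i k = 0) ∧
      ∑ i ∈ S, ν i * Real.log (ν i / (Real.exp 1 * c i)) ≤ M := by
  intro S
  induction S using Finset.strongInduction with
  | _ S IH =>
  intro β c hc M hM
  classical
  by_cases hQ : ∃ d : Fin n → ℝ, (∀ i ∈ S, ∑ k, β i k * d k ≤ 0) ∧ ∃ i ∈ S, ∑ k, β i k * d k < 0
  · -- a receding direction exists: pass to the sub-support
    obtain ⟨d, hle, i0, hi0S, hi0⟩ := hQ
    set T := S.filter (fun i => ∑ k, β i k * d k = 0) with hT
    have hTsub : T ⊆ S := by rw [hT]; exact Finset.filter_subset _ _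
    have hTS : T ⊂ S := by
      rw [hT]; exact Finset.filter_ssubset.mpr ⟨i0, hi0S, hi0.ne⟩
    have hMT : ∀ x : Fin n → ℝ, -M ≤ ∑ i ∈ T, c i * Real.exp (∑ k, β i k * x k) := by
      intro x
      have hrw : ∀ (i) (s : ℝ), (∑ k, β i k * (x k + s * d k))
          = (∑ k, β i k * x k) + s * (∑ k, β i k * d k) := by
        intro i s
        rw [Finset.mul_sum, ← Finset.sum_add_distrib]
        exact Finset.sum_congr rfl fun k _ => by ring
      have htend : Tendsto (fun s : ℝ => ∑ i ∈ S, c i * Real.exp (∑ k, β i k * (x k + s * d k)))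
          atTop (𝓝 (∑ i ∈ T, c i * Real.exp (∑ k, β i k * x k))) := by
        have hsplit : ∀ s : ℝ, ∑ i ∈ S, c i * Real.exp (∑ k, β i k * (x k + s * d k))
            = (∑ i ∈ T, c i * Real.exp (∑ k, β i k * (x k + s * d k)))
              + ∑ i ∈ S.filter (fun i => ¬ (∑ k, β i k * d k = 0)),
                  c i * Real.exp (∑ k, β i k * (x k + s * d k)) := by
          intro s; rw [hT, Finset.sum_filter_add_sum_filter_not]
        simp only [hsplit]
        have h1 : Tendsto (fun s : ℝ => ∑ i ∈ T, c i * Real.exp (∑ k, β i k * (x k + s * d k)))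
            atTop (𝓝 (∑ i ∈ T, c i * Real.exp (∑ k, β i k * x k))) := by
          apply tendsto_finset_sum
          intro i hi
          have hiz : (∑ k, β i k * d k) = 0 := by
            have := Finset.mem_filter.mp (hT ▸ hi)
            exact this.2
          simp only [hrw, hiz, mul_zero, add_zero]
          exact tendsto_const_nhds
        have h2 : Tendsto (fun s : ℝ => ∑ i ∈ S.filter (fun i => ¬ (∑ k, β i k * d k = 0)),
            c i * Real.exp (∑ k, β i k * (x k + s * d k))) atTop (𝓝 0) := by
          have hz : Tendsto (fun s : ℝ => ∑ i ∈ S.filter (fun i => ¬ (∑ k, β i k * d k = 0)),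
              c i * Real.exp (∑ k, β i k * (x k + s * d k))) atTop
              (𝓝 (∑ _i ∈ S.filter (fun i => ¬ (∑ k, β i k * d k = 0)), (0:ℝ))) := by
            apply tendsto_finset_sum
            intro i hi
            obtain ⟨hiS, hine⟩ := Finset.mem_filter.mp hi
            have hneg : (∑ k, β i k * d k) < 0 := lt_of_le_of_ne (hle i hiS) hine
            simp only [hrw]
            have hb : Tendsto (fun s : ℝ => (∑ k, β i k * x k) + s * (∑ k, β i k * d k))
                atTop atBot := by
              apply tendsto_atBot_add_const_left
              exact Tendsto.atTop_mul_const_of_neg hneg tendsto_id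
            have := (Real.tendsto_exp_atBot.comp hb).const_mul (c i)
            simpa using this
          simpa using hz
        simpa using h1.add h2
      exact ge_of_tendsto' htend fun s => hM (fun k => x k + s * d k)
    obtain ⟨ν, hν0, hνnn, hνlin, hνD⟩ := IH T hTS β c (fun i hi => hc i (hTsub hi)) M hMT
    refine ⟨ν, ?_, ?_, ?_, ?_⟩
    · intro i hi
      exact hν0 i (fun hiT => hi (hTsub hiT))
    · intro i hi
      by_cases hiT : i ∈ T
      · exact hνnn i hiT
      · rw [hν0 i hiT]
    · intro k
      rw [← Finset.sum_subset hTsub (fun i _ hi => by rw [hν0 i hi, zero_mul])]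
      exact hνlin k
    · rw [← Finset.sum_subset hTsub (fun i _ hi => by rw [hν0 i hi, zero_mul])]
      exact hνD
  · -- no receding direction: a minimizer exists on the span
    push_neg at hQ
    by_cases hz : ∀ i ∈ S, β i = 0
    · -- all exponents vanish: take ν = c on S
      refine ⟨fun i => if i ∈ S then c i else 0, fun i hi => if_neg hi,
        fun i hi => by dsimp only; rw [if_pos hi]; exact (hc i hi).le, ?_, ?_⟩
      · intro k
        apply Finset.sum_eq_zero
        intro i hi
        rw [hz i hi]
        simp
      · have hlog : ∀ i ∈ S, (if i ∈ S then c i else 0) *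
            Real.log ((if i ∈ S then c i else 0) / (Real.exp 1 * c i)) = -(c i) := by
          intro i hi
          rw [if_pos hi]
          have hci := (hc i hi).ne'
          have hdiv : c i / (Real.exp 1 * c i) = (Real.exp 1)⁻¹ := by
            rw [mul_comm, div_mul_eq_div_div, div_self hci, one_div]
          rw [hdiv, Real.log_inv, Real.log_exp]
          ring
        rw [Finset.sum_congr rfl hlog]
        have hM0 := hM 0
        simp only [Pi.zero_apply, mul_zero, Finset.sum_const_zero, Real.exp_zero, mul_one] at hM0
        rw [Finset.sum_neg_distrib]
        linarith
    · push_neg at hz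
      obtain ⟨i1, hi1S, hβ1⟩ := hz
      have hSne : S.Nonempty := ⟨i1, hi1S⟩
      let βE : ι → EuclideanSpace ℝ (Fin n) := fun i => (WithLp.equiv 2 (Fin n → ℝ)).symm (β i)
      have hinner : ∀ (i) (v : EuclideanSpace ℝ (Fin n)), ⟪βE i, v⟫ = ∑ k, β i k * v k := by
        intro i v
        simp [PiLp.inner_apply, RCLike.inner_apply, βE, mul_comm]
      set V : Submodule ℝ (EuclideanSpace ℝ (Fin n)) := Submodule.span ℝ (βE '' ↑S) with hV
      have hβV : ∀ i ∈ S, βE i ∈ V := fun i hi =>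
        Submodule.subset_span (Set.mem_image_of_mem _ (by exact_mod_cast hi))
      have horth : ∀ v : EuclideanSpace ℝ (Fin n), (∀ i ∈ S, ⟪βE i, v⟫ = 0) →
          ∀ w ∈ V, ⟪w, v⟫ = 0 := by
        intro v hv w hw
        induction hw using Submodule.span_induction with
        | mem x hx =>
            obtain ⟨i, hi, rfl⟩ := hx
            exact hv i (by exact_mod_cast hi)
        | zero => exact inner_zero_left v
        | add x y hx hy ihx ihy => rw [inner_add_left, ihx, ihy, add_zero]
        | smul r x hx ihx => rw [real_inner_smul_left, ihx, mul_zero]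
      have hVzero : ∀ v ∈ V, (∀ i ∈ S, ⟪βE i, v⟫ = 0) → v = 0 := by
        intro v hvV hv
        exact inner_self_eq_zero.mp (horth v hv v hvV)
      have hposdir : ∀ v ∈ V, v ≠ 0 → ∃ i ∈ S, 0 < ⟪βE i, v⟫ := by
        intro v hvV hvne
        by_contra hcon
        push_neg at hcon
        have hle : ∀ i ∈ S, ∑ k, β i k * v k ≤ 0 := by
          intro i hi
          rw [← hinner i v]
          exact hcon i hi
        have := hQ (fun k => v k) hle
        refine hvne (hVzero v hvV fun i hi => ?_)
        rw [hinner i v]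
        exact le_antisymm (by rw [← hinner i v]; exact hcon i hi) (this i hi)
      set cmin : ℝ := S.inf' hSne c with hcmin
      have hcminpos : 0 < cmin := (Finset.lt_inf'_iff hSne).mpr hc
      set f : EuclideanSpace ℝ (Fin n) → ℝ := fun v => ∑ i ∈ S, c i * Real.exp (⟪βE i, v⟫)
        with hf
      have hfM : ∀ v, -M ≤ f v := by
        intro v
        have := hM (fun k => v k)
        simpa [hf, hinner] using this
      have hfpos : ∀ v, 0 < f v := fun v =>
        Finset.sum_pos (fun i hi => mul_pos (hc i hi) (Real.exp_pos _)) hSne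
      have hfcont : Continuous f :=
        continuous_finset_sum _ fun i _ =>
          continuous_const.mul ((continuous_const.inner continuous_id).rexp)
      set φ : EuclideanSpace ℝ (Fin n) → ℝ := fun v => S.sup' hSne fun i => ⟪βE i, v⟫ with hφ
      have hφcont : Continuous φ :=
        continuous_finset_sup' hSne fun i => continuous_const.inner continuous_id
      set Sp : Set (EuclideanSpace ℝ (Fin n)) := Metric.sphere 0 1 ∩ (V : Set _) with hSp
      have hSpcompact : IsCompact Sp :=
        (isCompact_sphere 0 1).inter_right V.closed_of_finiteDimensional
      have hβE1 : βE i1 ≠ 0 := by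
        intro h
        apply hβ1
        funext k
        have := congrFun (congrArg (WithLp.equiv 2 (Fin n → ℝ)) h) k
        simpa [βE] using this
      have hβE1norm : ‖βE i1‖ ≠ 0 := norm_ne_zero_iff.mpr hβE1
      have hSpne : Sp.Nonempty := by
        refine ⟨‖βE i1‖⁻¹ • βE i1, ?_, V.smul_mem _ (hβV i1 hi1S)⟩
        rw [mem_sphere_zero_iff_norm, norm_smul, norm_inv, norm_norm]
        exact inv_mul_cancel₀ hβE1norm
      obtain ⟨d0, hd0mem, hd0min⟩ := hSpcompact.exists_isMinOn hSpne hφcont.continuousOn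
      set κ : ℝ := φ d0 with hκ
      have hd0ne : d0 ≠ 0 := by
        intro h
        have := hd0mem.1
        rw [h, mem_sphere_zero_iff_norm, norm_zero] at this
        norm_num at this
      have hκpos : 0 < κ := by
        obtain ⟨i, hiS, hipos⟩ := hposdir d0 hd0mem.2 hd0ne
        exact lt_of_lt_of_le hipos (Finset.le_sup' (fun j => (⟪βE j, d0⟫ : ℝ)) hiS)
      have hd0norm : ‖d0‖ = 1 := mem_sphere_zero_iff_norm.mp hd0mem.1
      have hgrow : ∀ v ∈ V, ∃ i ∈ S, κ * ‖v‖ ≤ ⟪βE i, v⟫ := by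
        intro v hvV
        rcases eq_or_ne v 0 with rfl | hvne
        · exact ⟨i1, hi1S, by simp⟩
        · have hvnorm : ‖v‖ ≠ 0 := norm_ne_zero_iff.mpr hvne
          set w : EuclideanSpace ℝ (Fin n) := ‖v‖⁻¹ • v with hw
          have hwSp : w ∈ Sp := by
            refine ⟨?_, V.smul_mem _ hvV⟩
            rw [mem_sphere_zero_iff_norm, hw, norm_smul, norm_inv, norm_norm]
            exact inv_mul_cancel₀ hvnorm
          have hκw : κ ≤ φ w := isMinOn_iff.mp hd0min w hwSp
          obtain ⟨i, hiS, hieq⟩ := Finset.exists_mem_eq_sup' hSne fun i => ⟪βE i, w⟫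
          refine ⟨i, hiS, ?_⟩
          have hvw : v = ‖v‖ • w := by
            rw [hw, smul_smul, mul_inv_cancel₀ hvnorm, one_smul]
          have h1 : κ ≤ ⟪βE i, w⟫ := by rw [← hieq]; exact hκw
          have h2 : ⟪βE i, w⟫ = ‖v‖⁻¹ * ⟪βE i, v⟫ := by
            rw [hw, real_inner_smul_right]
          have h3 : κ ≤ ‖v‖⁻¹ * ⟪βE i, v⟫ := h2 ▸ h1
          calc κ * ‖v‖ ≤ (‖v‖⁻¹ * ⟪βE i, v⟫) * ‖v‖ :=
                mul_le_mul_of_nonneg_right h3 (norm_nonneg v)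
            _ = ⟪βE i, v⟫ := by field_simp
      have hlow : ∀ v ∈ V, cmin * Real.exp (κ * ‖v‖) ≤ f v := by
        intro v hvV
        obtain ⟨i, hiS, hi⟩ := hgrow v hvV
        have hcle : cmin ≤ c i := Finset.inf'_le c hiS
        calc cmin * Real.exp (κ * ‖v‖) ≤ c i * Real.exp (⟪βE i, v⟫) :=
              mul_le_mul hcle (Real.exp_le_exp.mpr hi)
                (Real.exp_pos _).le (hc i hiS).le
          _ ≤ f v := Finset.single_le_sum (f := fun j => c j * Real.exp (⟪βE j, v⟫))
              (fun j hj => (mul_pos (hc j hj) (Real.exp_pos _)).le) hiS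
      set R : ℝ := max 1 (κ⁻¹ * Real.log (f 0 / cmin)) with hR
      have hRpos : (0:ℝ) < R := lt_of_lt_of_le one_pos (le_max_left _ _)
      have hf0R : ∀ v ∈ V, R ≤ ‖v‖ → f 0 ≤ f v := by
        intro v hvV hRv
        have hlogR : Real.log (f 0 / cmin) ≤ κ * R := by
          have h1 : κ⁻¹ * Real.log (f 0 / cmin) ≤ R := le_max_right _ _
          calc Real.log (f 0 / cmin) = κ * (κ⁻¹ * Real.log (f 0 / cmin)) := by
                field_simp
            _ ≤ κ * R := mul_le_mul_of_nonneg_left h1 hκpos.le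
        have hq : f 0 / cmin ≤ Real.exp (κ * ‖v‖) := by
          have h2 : f 0 / cmin = Real.exp (Real.log (f 0 / cmin)) :=
            (Real.exp_log (div_pos (hfpos 0) hcminpos)).symm
          rw [h2]
          apply Real.exp_le_exp.mpr
          exact le_trans hlogR (mul_le_mul_of_nonneg_left hRv hκpos.le)
        calc f 0 = cmin * (f 0 / cmin) := by field_simp
          _ ≤ cmin * Real.exp (κ * ‖v‖) := mul_le_mul_of_nonneg_left hq hcminpos.le
          _ ≤ f v := hlow v hvV
      set K : Set (EuclideanSpace ℝ (Fin n)) := Metric.closedBall 0 R ∩ (V : Set _) with hK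
      have hKcompact : IsCompact K :=
        (isCompact_closedBall 0 R).inter_right V.closed_of_finiteDimensional
      have hKne : K.Nonempty :=
        ⟨0, Metric.mem_closedBall_self hRpos.le, V.zero_mem⟩
      obtain ⟨xs, hxsK, hxsmin⟩ := hKcompact.exists_isMinOn hKne hfcont.continuousOn
      have hxsV : xs ∈ V := hxsK.2
      have hglob : ∀ v ∈ V, f xs ≤ f v := by
        intro v hvV
        by_cases hvR : ‖v‖ ≤ R
        · exact isMinOn_iff.mp hxsmin v ⟨Metric.mem_closedBall.mpr (by simpa using hvR), hvV⟩
        · calc f xs ≤ f 0 := isMinOn_iff.mp hxsmin 0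
                ⟨Metric.mem_closedBall_self hRpos.le, V.zero_mem⟩
            _ ≤ f v := hf0R v hvV (le_of_not_ge hvR)
      have hcrit : ∀ v ∈ V, ∑ i ∈ S, (c i * Real.exp (⟪βE i, xs⟫)) * ⟪βE i, v⟫ = 0 := by
        intro v hvV
        have heq : ∀ s : ℝ, f (xs + s • v)
            = ∑ i ∈ S, c i * Real.exp (⟪βE i, xs⟫ + s * ⟪βE i, v⟫) := by
          intro s
          simp only [hf, inner_add_right, real_inner_smul_right]
        have hterm : ∀ i ∈ S, HasDerivAt
            (fun s : ℝ => c i * Real.exp (⟪βE i, xs⟫ + s * ⟪βE i, v⟫))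
            ((c i * Real.exp (⟪βE i, xs⟫)) * ⟪βE i, v⟫) 0 := by
          intro i _
          have h1 : HasDerivAt (fun s : ℝ => ⟪βE i, xs⟫ + s * ⟪βE i, v⟫)
              (⟪βE i, v⟫) 0 := by
            simpa using ((hasDerivAt_id (0:ℝ)).mul_const (⟪βE i, v⟫)).const_add
              (⟪βE i, xs⟫)
          have h2 := (h1.exp).const_mul (c i)
          simpa [mul_assoc] using h2
        have hsum := HasDerivAt.fun_sum hterm
        have hD : HasDerivAt (fun s : ℝ => f (xs + s • v))
            (∑ i ∈ S, (c i * Real.exp (⟪βE i, xs⟫)) * ⟪βE i, v⟫) 0 :=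
          hsum.congr_of_eventuallyEq (Filter.Eventually.of_forall heq)
        have hloc : IsLocalMin (fun s : ℝ => f (xs + s • v)) 0 := by
          apply Filter.Eventually.of_forall
          intro s
          have hmem : xs + s • v ∈ V := V.add_mem hxsV (V.smul_mem s hvV)
          simpa using hglob _ hmem
        exact hloc.hasDerivAt_eq_zero hD
      set w : EuclideanSpace ℝ (Fin n) :=
        ∑ i ∈ S, (c i * Real.exp (⟪βE i, xs⟫)) • βE i with hwdef
      have hwV : w ∈ V := Submodule.sum_mem _ fun i hi => V.smul_mem _ (hβV i hi)
      have hwinner : ∀ v : EuclideanSpace ℝ (Fin n),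
          ⟪w, v⟫ = ∑ i ∈ S, (c i * Real.exp (⟪βE i, xs⟫)) * ⟪βE i, v⟫ := by
        intro v
        rw [hwdef, sum_inner]
        exact Finset.sum_congr rfl fun i _ => real_inner_smul_left _ _ _
      have hw0 : w = 0 := by
        apply (inner_self_eq_zero (𝕜 := ℝ)).mp
        rw [hwinner w]
        exact hcrit w hwV
      refine ⟨fun i => if i ∈ S then c i * Real.exp (⟪βE i, xs⟫) else 0,
        fun i hi => if_neg hi,
        fun i hi => by dsimp only; rw [if_pos hi]; exact (mul_pos (hc i hi) (Real.exp_pos _)).le, ?_, ?_⟩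
      · intro k
        have h1 : ⟪w, EuclideanSpace.single k (1:ℝ)⟫ = 0 := by rw [hw0]; exact inner_zero_left _
        rw [hwinner] at h1
        rw [← h1]
        apply Finset.sum_congr rfl
        intro i hi
        dsimp only
        rw [if_pos hi]
        congr 1
        rw [hinner]
        simp [EuclideanSpace.single_apply]
      · have hterm : ∀ i ∈ S, (if i ∈ S then c i * Real.exp (⟪βE i, xs⟫) else 0) *
            Real.log ((if i ∈ S then c i * Real.exp (⟪βE i, xs⟫) else 0) / (Real.exp 1 * c i))
            = (c i * Real.exp (⟪βE i, xs⟫)) * ⟪βE i, xs⟫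
              - c i * Real.exp (⟪βE i, xs⟫) := by
          intro i hi
          rw [if_pos hi]
          have hci := (hc i hi).ne'
          have harg : (c i * Real.exp (⟪βE i, xs⟫)) / (Real.exp 1 * c i)
              = Real.exp (⟪βE i, xs⟫ - 1) := by
            rw [Real.exp_sub]
            field_simp
          rw [harg, Real.log_exp]
          ring
        rw [Finset.sum_congr rfl hterm, Finset.sum_sub_distrib, hcrit xs hxsV, zero_sub]
        have := hfM xs
        rw [hf] at this
        linarith


open Finset

set_option maxHeartbeats 1000000 in
/-- For `b` in the interior of the SAGE cone with `b - ε·(1,…,1)` SAGE, there is a SAGE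
decomposition `(c, ν)` of `b` and a rational `δ > 0` such that
`D((1+δ)·ν^(j)_{∖j}, e·c^(j)_{∖j}) + ε/2 ≤ c_j^(j)` for all `j`. -/
theorem sage_slack_scaling
    (n t : ℕ) (a : Fin t → Fin n → ℕ) (b : Fin t → ℝ)
    (hb : b ∈ interior (CSage n t a))
    (ε : ℝ) (hε : 0 < ε)
    (hbe : (fun j => b j - ε) ∈ CSage n t a) :
    ∃ (c ν : Fin t → Fin t → ℝ) (δ : ℚ), 0 < δ ∧
      (∀ i, ∑ j, c j i = b i) ∧
      (∀ j, ∀ k, ∑ i, (a i k : ℝ) * ν j i = 0) ∧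
      (∀ j, ν j j = -∑ i ∈ Finset.univ.erase j, ν j i) ∧
      (∀ j i, i ≠ j → 0 ≤ ν j i ∧ 0 < c j i) ∧
      (∀ j, (∑ i ∈ Finset.univ.erase j,
          ((1 + (δ : ℝ)) * ν j i) *
            Real.log (((1 + (δ : ℝ)) * ν j i) / (Real.exp 1 * c j i)))
        + ε / 2 ≤ c j j) := by
  clear hb
  classical
  rcases Nat.eq_zero_or_pos t with ht | ht
  · subst ht
    exact ⟨0, 0, 1, one_pos, fun i => i.elim0, fun j => j.elim0, fun j => j.elim0,
      fun j => j.elim0, fun j => j.elim0⟩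
  obtain ⟨K, r, hrsum, hrage⟩ := hbe
  have htR : (0:ℝ) < t := by exact_mod_cast ht
  let j0 : Fin t := ⟨0, ht⟩
  let idx : Fin K → Fin t := fun m => if h : ∃ j, r m j < 0 then h.choose else j0
  have hidx : ∀ m i, i ≠ idx m → 0 ≤ r m i := by
    intro m i hne
    by_contra hlt
    push_neg at hlt
    have hex : ∃ j, r m j < 0 := ⟨i, hlt⟩
    have h1 : idx m = hex.choose := by simp only [idx]; exact dif_pos hex
    have h3 : i = hex.choose := (hrage m).2 (show i ∈ {j | r m j < 0} from hlt)
      (show hex.choose ∈ {j | r m j < 0} from hex.choose_spec)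
    exact hne (h3.trans h1.symm)
  set c' : Fin t → Fin t → ℝ := fun j i => ∑ m ∈ univ.filter (fun m => idx m = j), r m i
    with hc'def
  have hc'col : ∀ i, ∑ j, c' j i = b i - ε := by
    intro i
    rw [hc'def]
    rw [Finset.sum_fiberwise_of_maps_to (fun m _ => Finset.mem_univ (idx m)) (fun m => r m i)]
    simpa using hrsum i
  have hc'off : ∀ j i, i ≠ j → 0 ≤ c' j i := by
    intro j i hne
    apply Finset.sum_nonneg
    intro m hm
    have hm' : idx m = j := (Finset.mem_filter.mp hm).2
    exact hidx m i (by rw [hm']; exact hne)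
  have hc'sig : ∀ j (x : Fin n → ℝ),
      0 ≤ ∑ i, c' j i * Real.exp (∑ k, (a i k : ℝ) * x k) := by
    intro j x
    have hswap : ∑ i, c' j i * Real.exp (∑ k, (a i k : ℝ) * x k)
        = ∑ m ∈ univ.filter (fun m => idx m = j), signomial n t a (r m) x := by
      simp only [hc'def, signomial, Finset.sum_mul]
      exact Finset.sum_comm
    rw [hswap]
    exact Finset.sum_nonneg fun m _ => (hrage m).1 x
  set c : Fin t → Fin t → ℝ :=
    fun j i => if i = j then c' j j + ε * (t + 1) / (2 * t) else c' j i + ε / (2 * t) with hcdef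
  have hcdiag : ∀ j, c j j = c' j j + ε * (t + 1) / (2 * t) := fun j => by
    simp only [hcdef, if_pos rfl]
  have hcoffeq : ∀ j i, i ≠ j → c j i = c' j i + ε / (2 * t) := fun j i h => by
    simp only [hcdef, if_neg h]
  have hepos : 0 < ε / (2 * t) := by positivity
  have hcpos : ∀ j i, i ≠ j → 0 < c j i := by
    intro j i h
    rw [hcoffeq j i h]
    linarith [hc'off j i h]
  have hcol : ∀ i, ∑ j, c j i = b i := by
    intro i
    rw [← Finset.add_sum_erase _ (fun j => c j i) (Finset.mem_univ i)]
    have h1 : ∑ j ∈ univ.erase i, c j i = ∑ j ∈ univ.erase i, (c' j i + ε / (2 * t)) :=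
      Finset.sum_congr rfl fun j hj => hcoffeq j i (Ne.symm (Finset.mem_erase.mp hj).1)
    rw [h1, Finset.sum_add_distrib, Finset.sum_const,
      Finset.card_erase_of_mem (Finset.mem_univ i), Finset.card_univ, Fintype.card_fin,
      hcdiag i, nsmul_eq_mul]
    have h2 : c' i i + ∑ j ∈ univ.erase i, c' j i = ∑ j, c' j i :=
      Finset.add_sum_erase _ (fun j => c' j i) (Finset.mem_univ i)
    have h3 := hc'col i
    have hcast : ((t - 1 : ℕ) : ℝ) = (t : ℝ) - 1 := by
      rw [Nat.cast_sub ht]; simp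
    rw [hcast]
    have harith : ε * (t + 1) / (2 * t) + ((t:ℝ) - 1) * (ε / (2 * t)) = ε := by
      field_simp
      ring
    linarith
  have hkey : ∀ j : Fin t, ∃ ν : Fin t → ℝ,
      (∀ i ∉ univ.erase j, ν i = 0) ∧ (∀ i ∈ univ.erase j, 0 ≤ ν i) ∧
      (∀ k, ∑ i ∈ univ.erase j, ν i * ((a i k : ℝ) - (a j k : ℝ)) = 0) ∧
      ∑ i ∈ univ.erase j, ν i * Real.log (ν i / (Real.exp 1 * c j i)) ≤ c' j j := by
    intro j
    refine key (univ.erase j) (fun i k => (a i k : ℝ) - (a j k : ℝ)) (c j)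
      (fun i hi => hcpos j i (Finset.mem_erase.mp hi).1) (c' j j) ?_
    intro x
    show -(c' j j) ≤ ∑ i ∈ univ.erase j,
      c j i * Real.exp (∑ k, ((a i k : ℝ) - (a j k : ℝ)) * x k)
    have h0 := hc'sig j x
    have hsplit : ∀ i : Fin t, Real.exp (∑ k, (a i k : ℝ) * x k)
        = Real.exp (∑ k, (a j k : ℝ) * x k)
          * Real.exp (∑ k, ((a i k : ℝ) - (a j k : ℝ)) * x k) := by
      intro i
      rw [← Real.exp_add]
      congr 1
      rw [← Finset.sum_add_distrib]
      exact Finset.sum_congr rfl fun k _ => by ring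
    have h1 : 0 ≤ ∑ i, c' j i * Real.exp (∑ k, ((a i k : ℝ) - (a j k : ℝ)) * x k) := by
      have h2 : ∑ i, c' j i * Real.exp (∑ k, (a i k : ℝ) * x k)
          = Real.exp (∑ k, (a j k : ℝ) * x k)
            * ∑ i, c' j i * Real.exp (∑ k, ((a i k : ℝ) - (a j k : ℝ)) * x k) := by
        rw [Finset.mul_sum]
        exact Finset.sum_congr rfl fun i _ => by rw [hsplit i]; ring
      rw [h2] at h0
      exact nonneg_of_mul_nonneg_right h0 (Real.exp_pos _)
    have h3 : -(c' j j) ≤ ∑ i ∈ univ.erase j,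
        c' j i * Real.exp (∑ k, ((a i k : ℝ) - (a j k : ℝ)) * x k) := by
      rw [← Finset.add_sum_erase _
        (fun i => c' j i * Real.exp (∑ k, ((a i k : ℝ) - (a j k : ℝ)) * x k))
        (Finset.mem_univ j)] at h1
      have hEjj : Real.exp (∑ k, ((a j k : ℝ) - (a j k : ℝ)) * x k) = 1 := by simp
      rw [hEjj, mul_one] at h1
      linarith
    refine le_trans h3 (Finset.sum_le_sum ?_)
    intro i hi
    have hine : i ≠ j := (Finset.mem_erase.mp hi).1
    have hle : c' j i ≤ c j i := by
      rw [hcoffeq j i hine]; linarith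
    exact mul_le_mul_of_nonneg_right hle (Real.exp_pos _).le
  choose νr hν0 hν1 hν2 hν3 using hkey
  set ν : Fin t → Fin t → ℝ :=
    fun j => Function.update (νr j) j (-∑ i ∈ univ.erase j, νr j i) with hνdef
  have hνoff : ∀ j i, i ≠ j → ν j i = νr j i := by
    intro j i h
    simp only [hνdef]
    exact Function.update_of_ne h _ _
  have hνdiag : ∀ j, ν j j = -∑ i ∈ univ.erase j, νr j i := by
    intro j
    simp only [hνdef]
    exact Function.update_self _ _ _
  have hNnn : ∀ j, (0:ℝ) ≤ ∑ i ∈ univ.erase j, νr j i :=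
    fun j => Finset.sum_nonneg (hν1 j)
  set B : ℝ := 1 + ∑ j, (|∑ i ∈ univ.erase j, νr j i * Real.log (νr j i / (Real.exp 1 * c j i))|
      + 2 * ∑ i ∈ univ.erase j, νr j i) with hBdef
  have hBsumnn : ∀ j : Fin t, (0:ℝ) ≤
      |∑ i ∈ univ.erase j, νr j i * Real.log (νr j i / (Real.exp 1 * c j i))|
      + 2 * ∑ i ∈ univ.erase j, νr j i :=
    fun j => add_nonneg (abs_nonneg _) (by linarith [hNnn j])
  have hBpos : 0 < B := by
    have := Finset.sum_nonneg fun j (_ : j ∈ (univ : Finset (Fin t))) => hBsumnn j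
    rw [hBdef]
    linarith
  have hBj : ∀ j : Fin t,
      |∑ i ∈ univ.erase j, νr j i * Real.log (νr j i / (Real.exp 1 * c j i))|
      + 2 * ∑ i ∈ univ.erase j, νr j i ≤ B := by
    intro j
    have h1 := Finset.single_le_sum (fun j' (_ : j' ∈ (univ : Finset (Fin t))) => hBsumnn j')
      (Finset.mem_univ j)
    rw [hBdef]
    linarith
  obtain ⟨q, hq0, hq1⟩ := exists_rat_btwn (show (0:ℝ) < min 1 (ε / (2 * t * B)) from
    lt_min one_pos (by positivity))
  have hq0' : 0 < q := by exact_mod_cast hq0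
  have hqle1 : (q:ℝ) ≤ 1 := le_of_lt (lt_of_lt_of_le hq1 (min_le_left _ _))
  have hqB : (q:ℝ) * B ≤ ε / (2 * t) := by
    have h1 : (q:ℝ) ≤ ε / (2 * t * B) := le_of_lt (lt_of_lt_of_le hq1 (min_le_right _ _))
    calc (q:ℝ) * B ≤ (ε / (2 * t * B)) * B := mul_le_mul_of_nonneg_right h1 hBpos.le
      _ = ε / (2 * t) := by
        field_simp
  refine ⟨c, ν, q, hq0', hcol, ?_, ?_, ?_, ?_⟩
  · intro j k
    rw [← Finset.add_sum_erase _ (fun i => (a i k : ℝ) * ν j i) (Finset.mem_univ j)]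
    have h1 : ∑ i ∈ univ.erase j, (a i k : ℝ) * ν j i
        = ∑ i ∈ univ.erase j, (νr j i * ((a i k : ℝ) - (a j k : ℝ)) + (a j k : ℝ) * νr j i) := by
      refine Finset.sum_congr rfl fun i hi => ?_
      rw [hνoff j i (Finset.mem_erase.mp hi).1]
      ring
    rw [h1, Finset.sum_add_distrib, hν2 j k, zero_add, hνdiag j, ← Finset.mul_sum]
    ring
  · intro j
    rw [hνdiag j]
    congr 1
    exact Finset.sum_congr rfl fun i hi => (hνoff j i (Finset.mem_erase.mp hi).1).symm
  · intro j i hij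
    exact ⟨by rw [hνoff j i hij]; exact hν1 j i (Finset.mem_erase.mpr ⟨hij, Finset.mem_univ i⟩),
      hcpos j i hij⟩
  · intro j
    have hq0R : (0:ℝ) < q := hq0
    have hd0 : (0:ℝ) < 1 + (q:ℝ) := by linarith
    have hterm : ∀ i ∈ univ.erase j,
        ((1 + (q:ℝ)) * ν j i) * Real.log (((1 + (q:ℝ)) * ν j i) / (Real.exp 1 * c j i))
        = (1 + (q:ℝ)) * (νr j i * Real.log (νr j i / (Real.exp 1 * c j i)))
          + ((1 + (q:ℝ)) * Real.log (1 + (q:ℝ))) * νr j i := by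
      intro i hi
      have hioff := (Finset.mem_erase.mp hi).1
      rw [hνoff j i hioff]
      rcases eq_or_lt_of_le (hν1 j i hi) with h0 | hpos
      · rw [← h0]
        simp
      · have hci := hcpos j i hioff
        have hfrac : (0:ℝ) < νr j i / (Real.exp 1 * c j i) :=
          div_pos hpos (mul_pos (Real.exp_pos 1) hci)
        have hsplit : ((1 + (q:ℝ)) * νr j i) / (Real.exp 1 * c j i)
            = (1 + (q:ℝ)) * (νr j i / (Real.exp 1 * c j i)) := by ring
        rw [hsplit, Real.log_mul hd0.ne' hfrac.ne']
        ring
    rw [Finset.sum_congr rfl hterm, Finset.sum_add_distrib, ← Finset.mul_sum, ← Finset.mul_sum]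
    have hDle := hν3 j
    have hBj' := hBj j
    have habs : (∑ i ∈ univ.erase j, νr j i * Real.log (νr j i / (Real.exp 1 * c j i)))
        ≤ |∑ i ∈ univ.erase j, νr j i * Real.log (νr j i / (Real.exp 1 * c j i))| :=
      le_abs_self _
    have hNj := hNnn j
    have hlog1 : Real.log (1 + (q:ℝ)) ≤ (q:ℝ) := by
      have := Real.log_le_sub_one_of_pos hd0
      linarith
    have hlog0 : 0 ≤ Real.log (1 + (q:ℝ)) := Real.log_nonneg (by linarith)
    have hp1 : (q:ℝ) * (∑ i ∈ univ.erase j, νr j i * Real.log (νr j i / (Real.exp 1 * c j i)))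
        ≤ (q:ℝ) * |∑ i ∈ univ.erase j, νr j i * Real.log (νr j i / (Real.exp 1 * c j i))| :=
      mul_le_mul_of_nonneg_left habs hq0R.le
    have hp2 : ((1 + (q:ℝ)) * Real.log (1 + (q:ℝ))) * (∑ i ∈ univ.erase j, νr j i)
        ≤ 2 * (q:ℝ) * (∑ i ∈ univ.erase j, νr j i) := by
      have h4 : (1 + (q:ℝ)) * Real.log (1 + (q:ℝ)) ≤ 2 * (q:ℝ) := by
        nlinarith
      exact mul_le_mul_of_nonneg_right h4 hNj
    have hp3 : (q:ℝ) * (|∑ i ∈ univ.erase j, νr j i * Real.log (νr j i / (Real.exp 1 * c j i))|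
        + 2 * ∑ i ∈ univ.erase j, νr j i) ≤ (q:ℝ) * B :=
      mul_le_mul_of_nonneg_left hBj' hq0R.le
    have harith : ε / (2 * t) + ε / 2 ≤ ε * (t + 1) / (2 * t) := by
      have : ε / (2 * t) + ε / 2 = ε * (t + 1) / (2 * t) := by
        field_simp
        ring
      linarith
    rw [hcdiag j]
    nlinarith [hp1, hp2, hp3, hDle, hqB, harith]
end

section
/- Let p(x) = Σ_{α ∈ A} b_α x^α be a real polynomial in n variables with finite support A ⊂ ℕ^n containing 0. Let S ⊆ A be a set of exponents with α ∈ (2ℕ)^n and b_α > 0 for every α ∈ S, with 0 ∈ S, and let N := A ∖ S. Suppose that for every β ∈ N we are given a subset C^β ⊆ S with 0 ∈ C^β, positive reals λ^β_α (α ∈ C^β) with Σ_{α ∈ C^β} λ^β_α = 1 and Σ_{α ∈ C^β} λ^β_α · α = β, and reals X_{β,α} ≥ 0 (α ∈ S) with X_{β,α} > 0 for α ∈ C^β and X_{β,α} = 0 for α ∈ S ∖ C^β, satisfying: (i) Σ_{β ∈ N} X_{β,α} ≤ b_α for every α ∈ S ∖ {0}; (ii) Π_{α ∈ C^β} (X_{β,α}/λ^β_α)^{λ^β_α}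 ≥ |b_β| for every β ∈ N. Then with C := b_0 − Σ_{β ∈ N} X_{β,0}, one has p(x) ≥ C for all x ∈ ℝ^n. -/
open Finset

/-- **Correctness of the lower bound produced by the rounding-projection algorithm for SONC
decompositions.** Given a covering of the non-square support points `β ∈ N = A ∖ S` by
circuits `C^β ⊆ S` through the origin, barycentric coordinates `λ^β` and nonnegative
coefficients `X_{β,α}` satisfying the scaling and circuit-number conditions, the constant
`C = b_0 - Σ_β X_{β,0}` is a lower bound for `p` on `ℝ^n`. -/
theorem sonc_lower_bound
    (n : ℕ) (A : Finset (Fin n → ℕ)) (b : (Fin n → ℕ) → ℝ)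
    (h0A : (0 : Fin n → ℕ) ∈ A)
    (S : Finset (Fin n → ℕ)) (hSA : S ⊆ A) (h0S : (0 : Fin n → ℕ) ∈ S)
    (hS : ∀ α ∈ S, (∀ i, Even (α i)) ∧ 0 < b α)
    (Cov : (Fin n → ℕ) → Finset (Fin n → ℕ))
    (lam X : (Fin n → ℕ) → (Fin n → ℕ) → ℝ)
    (hCovS : ∀ β ∈ A \ S, Cov β ⊆ S)
    (hCov0 : ∀ β ∈ A \ S, (0 : Fin n → ℕ) ∈ Cov β)
    (hlampos : ∀ β ∈ A \ S, ∀ α ∈ Cov β, 0 < lam β α)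
    (hlamsum : ∀ β ∈ A \ S, ∑ α ∈ Cov β, lam β α = 1)
    (hbary : ∀ β ∈ A \ S, ∀ i, ∑ α ∈ Cov β, lam β α * (α i : ℝ) = (β i : ℝ))
    (hXnn : ∀ β ∈ A \ S, ∀ α ∈ S, 0 ≤ X β α)
    (hXpos : ∀ β ∈ A \ S, ∀ α ∈ Cov β, 0 < X β α)
    (hXzero : ∀ β ∈ A \ S, ∀ α ∈ S, α ∉ Cov β → X β α = 0)
    (hscal : ∀ α ∈ S, α ≠ 0 → ∑ β ∈ A \ S, X β α ≤ b α)
    (hcirc : ∀ β ∈ A \ S,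
      |b β| ≤ ∏ α ∈ Cov β, (X β α / lam β α) ^ (lam β α)) :
    ∀ x : Fin n → ℝ,
      b 0 - ∑ β ∈ A \ S, X β 0 ≤ ∑ α ∈ A, b α * ∏ i, x i ^ α i := by
  intro x
  -- the "absolute value" monomial
  set m : (Fin n → ℕ) → ℝ := fun α => ∏ i, |x i| ^ α i with hm
  have hmnn : ∀ α, 0 ≤ m α := fun α =>
    Finset.prod_nonneg fun i _ => pow_nonneg (abs_nonneg _) _
  -- on S the monomials agree with their absolute versions
  have hmS : ∀ α ∈ S, (∏ i, x i ^ α i) = m α := by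
    intro α hα
    exact Finset.prod_congr rfl fun i _ => ((hS α hα).1 i).pow_abs (x i) |>.symm
  have hmabs : ∀ β : Fin n → ℕ, |∏ i, x i ^ β i| = m β := by
    intro β
    rw [Finset.abs_prod]
    exact Finset.prod_congr rfl fun i _ => (abs_pow _ _)
  -- key per-circuit estimate
  have key : ∀ β ∈ A \ S, -(∑ α ∈ Cov β, X β α * m α) ≤ b β * ∏ i, x i ^ β i := by
    intro β hβ
    have hgeom : m β = ∏ α ∈ Cov β, (m α) ^ (lam β α) := by
      have : ∀ α ∈ Cov β, (m α) ^ (lam β α) = ∏ i, |x i| ^ (lam β α * (α i : ℝ)) := by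
        intro α hα
        rw [hm]
        rw [← Real.finset_prod_rpow _ _ (fun i _ => pow_nonneg (abs_nonneg _) _)]
        refine Finset.prod_congr rfl fun i _ => ?_
        rw [← Real.rpow_natCast (|x i|) (α i), ← Real.rpow_mul (abs_nonneg _),
          mul_comm]
      rw [Finset.prod_congr rfl this, Finset.prod_comm]
      refine Finset.prod_congr rfl fun i _ => ?_
      rw [← Real.rpow_sum_of_nonneg (abs_nonneg (x i))
        (fun α hα => mul_nonneg (hlampos β hβ α hα).le (Nat.cast_nonneg _)),
        hbary β hβ i, Real.rpow_natCast]
    have hamgm : (∏ α ∈ Cov β, (X β α / lam β α) ^ (lam β α)) * m β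
        ≤ ∑ α ∈ Cov β, X β α * m α := by
      have h1 : (∏ α ∈ Cov β, (X β α / lam β α) ^ (lam β α)) * m β
          = ∏ α ∈ Cov β, (X β α / lam β α * m α) ^ (lam β α) := by
        rw [hgeom, ← Finset.prod_mul_distrib]
        refine Finset.prod_congr rfl fun α hα => ?_
        rw [← Real.mul_rpow (div_nonneg (hXpos β hβ α hα).le (hlampos β hβ α hα).le)
          (hmnn α)]
      rw [h1]
      have h2 := Real.geom_mean_le_arith_mean_weighted (Cov β) (lam β)
        (fun α => X β α / lam β α * m α) (fun α hα => (hlampos β hβ α hα).le)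
        (hlamsum β hβ)
        (fun α hα => mul_nonneg
          (div_nonneg (hXpos β hβ α hα).le (hlampos β hβ α hα).le) (hmnn α))
      refine h2.trans (le_of_eq ?_)
      refine Finset.sum_congr rfl fun α hα => ?_
      have hne := (hlampos β hβ α hα).ne'
      field_simp
    have habs : |b β * ∏ i, x i ^ β i| ≤ ∑ α ∈ Cov β, X β α * m α := by
      rw [abs_mul, hmabs]
      calc |b β| * m β ≤ (∏ α ∈ Cov β, (X β α / lam β α) ^ (lam β α)) * m β :=
            mul_le_mul_of_nonneg_right (hcirc β hβ) (hmnn β)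
        _ ≤ _ := hamgm
    have := neg_abs_le (b β * ∏ i, x i ^ β i)
    linarith
  -- assemble
  have hsplit : ∑ α ∈ A, b α * ∏ i, x i ^ α i
      = (∑ β ∈ A \ S, b β * ∏ i, x i ^ β i) + ∑ α ∈ S, b α * m α := by
    rw [← Finset.sum_sdiff hSA]
    congr 1
    exact Finset.sum_congr rfl fun α hα => by rw [hmS α hα]
  have hstep1 : ∑ β ∈ A \ S, -(∑ α ∈ Cov β, X β α * m α)
      ≤ ∑ β ∈ A \ S, b β * ∏ i, x i ^ β i :=
    Finset.sum_le_sum key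
  -- extend each inner sum to all of S and swap
  have hswap : ∑ β ∈ A \ S, ∑ α ∈ Cov β, X β α * m α
      = ∑ α ∈ S, (∑ β ∈ A \ S, X β α) * m α := by
    have : ∀ β ∈ A \ S, ∑ α ∈ Cov β, X β α * m α = ∑ α ∈ S, X β α * m α := by
      intro β hβ
      refine Finset.sum_subset (hCovS β hβ) ?_
      intro α hαS hαC
      rw [hXzero β hβ α hαS hαC, zero_mul]
    rw [Finset.sum_congr rfl this, Finset.sum_comm]
    exact Finset.sum_congr rfl fun α _ => by rw [Finset.sum_mul]
  have hlb : ∑ α ∈ S, (b α - ∑ β ∈ A \ S, X β α) * m α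
      ≤ ∑ α ∈ A, b α * ∏ i, x i ^ α i := by
    rw [hsplit]
    have : ∑ α ∈ S, (b α - ∑ β ∈ A \ S, X β α) * m α
        = -(∑ β ∈ A \ S, ∑ α ∈ Cov β, X β α * m α) + ∑ α ∈ S, b α * m α := by
      rw [hswap, ← Finset.sum_neg_distrib, ← Finset.sum_add_distrib]
      exact Finset.sum_congr rfl fun α _ => by ring
    rw [this]
    have h' : -∑ β ∈ A \ S, ∑ α ∈ Cov β, X β α * m α
        = ∑ β ∈ A \ S, -(∑ α ∈ Cov β, X β α * m α) := by
      rw [Finset.sum_neg_distrib]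
    linarith [hstep1, h']
  refine le_trans ?_ hlb
  -- split off α = 0
  rw [← Finset.add_sum_erase S _ h0S]
  have hm0 : m 0 = 1 := by simp [hm]
  have h0term : (b 0 - ∑ β ∈ A \ S, X β 0) * m 0 = b 0 - ∑ β ∈ A \ S, X β 0 := by
    rw [hm0, mul_one]
  rw [h0term]
  have hrest : 0 ≤ ∑ α ∈ S.erase 0, (b α - ∑ β ∈ A \ S, X β α) * m α := by
    refine Finset.sum_nonneg fun α hα => ?_
    have hαS : α ∈ S := Finset.mem_of_mem_erase hα
    have hα0 : α ≠ 0 := Finset.ne_of_mem_erase hα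
    exact mul_nonneg (sub_nonneg.2 (hscal α hαS hα0)) (hmnn α)
  linarith
end
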